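/- arXiv:1004.5304 — 4 statements merged into one kernel-verified Lean document; each statement's English description precedes it below -/
import Mathlib

section
/- Let n ≥ 2 and s ∈ (0,1]. Let Ω ⊆ ℝⁿ be a domain, z ∈ ℝⁿ, r > 0, and 0 < b₀ < b₁ ≤ 1 with b₀ ≤ 1/2 and dist(z, ℝⁿ \ Ω) ≤ b₀ r. Let Ω_x be a connected component of Ω \ closure(B(z, b₀r)), and define u on Ω by: u(y) = 0 for y ∈ Ω \ Ω_x; u(y) = dist(y, B(z, b₀r)) / ((b₁ − b₀) r) for y ∈ Ω_x ∩ B(z, b₁r); and u(y) = 1 for y ∈ Ω_x \ B(z, b₁r). Then there exists a constant C > 0, depending only on n and s (and not on u, Ω_x, b₀, b₁, z, r), such that the function g := C ((b₁ − b₀) r)^{−s} · χ_{Ω_x ∩ B(z, r)} satisfies |u(y) − u(w)| ≤ |y − w|^s (g(y) + g(w)) for all y, w ∈ Ω with |y − w| < dist(y, ℝⁿ \ Ω)/8. -/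
open MeasureTheory Metric Set
open scoped ENNReal

noncomputable section

/-- Euclidean space `ℝⁿ`. -/
abbrev Eu (n : ℕ) : Type := EuclideanSpace ℝ (Fin n)

/-- A domain: a nonempty open connected subset. -/
def IsDomainEu {n : ℕ} (Ω : Set (Eu n)) : Prop := IsOpen Ω ∧ IsConnected Ω

/-- The Hajłasz gradient class `𝒟^{s,ρ}_ball(u)` on `Ω`: nonnegative measurable `g` such that
`|u x - u y| ≤ |x-y|^s (g x + g y)` for all `x, y ∈ Ω` off a null set with
`|x - y| < ρ · dist(x, ∂Ω)`. -/
def DBall {n : ℕ} (Ω : Set (Eu n)) (s ρ : ℝ) (u : Eu n → ℝ) : Set (Eu n → ℝ) :=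
  {g | Measurable g ∧ (∀ x, 0 ≤ g x) ∧
    ∃ N : Set (Eu n), N ⊆ Ω ∧ volume N = 0 ∧
      ∀ x ∈ Ω \ N, ∀ y ∈ Ω \ N,
        edist x y < ENNReal.ofReal ρ * EMetric.infEdist x Ωᶜ →
        |u x - u y| ≤ dist x y ^ s * (g x + g y)}

/-- The full Hajłasz gradient class `𝒟^s(u)` on `U`. -/
def DFull {n : ℕ} (U : Set (Eu n)) (s : ℝ) (u : Eu n → ℝ) : Set (Eu n → ℝ) :=
  {g | Measurable g ∧ (∀ x, 0 ≤ g x) ∧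
    ∃ N : Set (Eu n), N ⊆ U ∧ volume N = 0 ∧
      ∀ x ∈ U \ N, ∀ y ∈ U \ N, |u x - u y| ≤ dist x y ^ s * (g x + g y)}

/-- `inf_{g ∈ 𝒟^{s,ρ}_ball(u)} ‖g‖_{L^p(Ω)}`. -/
def ballNormRho {n : ℕ} (Ω : Set (Eu n)) (s p ρ : ℝ) (u : Eu n → ℝ) : ℝ≥0∞ :=
  ⨅ g ∈ DBall Ω s ρ u, eLpNorm g (ENNReal.ofReal p) (volume.restrict Ω)

/-- The `Ṁ^{s,p}_ball(Ω)` seminorm (with `ρ = 1/2`). -/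
def ballNorm {n : ℕ} (Ω : Set (Eu n)) (s p : ℝ) (u : Eu n → ℝ) : ℝ≥0∞ :=
  ballNormRho Ω s p (1/2) u

/-- The `Ṁ^{s,p}(U)` seminorm. -/
def fullNorm {n : ℕ} (U : Set (Eu n)) (s p : ℝ) (u : Eu n → ℝ) : ℝ≥0∞ :=
  ⨅ g ∈ DFull U s u, eLpNorm g (ENNReal.ofReal p) (volume.restrict U)

/-- Membership in `Ṁ^{s,p}_ball(Ω)`. -/
def MemMball {n : ℕ} (Ω : Set (Eu n)) (s p : ℝ) (u : Eu n → ℝ) : Prop :=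
  Measurable u ∧ ballNorm Ω s p u < ⊤

/-- Membership in `Ṁ^{s,p}(U)`. -/
def MemMfull {n : ℕ} (U : Set (Eu n)) (s p : ℝ) (u : Eu n → ℝ) : Prop :=
  Measurable u ∧ fullNorm U s p u < ⊤

/-- `Ω` supports a `(pn/(n-ps), p)_s`-Hajłasz–Sobolev–Poincaré imbedding. -/
def SupportsHSP {n : ℕ} (Ω : Set (Eu n)) (s p : ℝ) : Prop :=
  ∃ C : ℝ, 0 < C ∧ ∀ u : Eu n → ℝ, MemMball Ω s p u →
    eLpNorm (fun x => u x - ⨍ y in Ω, u y)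
        (ENNReal.ofReal (p * n / (n - p * s))) (volume.restrict Ω)
      ≤ ENNReal.ofReal C * ballNorm Ω s p u

/-- LLC(2) with constant `b`: points of `Ω \ B(z,r)` lie in the same connected component
of `Ω \ B(z, br)`. -/
def LLC2With {n : ℕ} (Ω : Set (Eu n)) (b : ℝ) : Prop :=
  ∀ (z : Eu n) (r : ℝ), 0 < r →
    ∀ x ∈ Ω \ ball z r, ∀ y ∈ Ω \ ball z r,
      y ∈ connectedComponentIn (Ω \ ball z (b * r)) x

/-- The LLC(2) property. -/
def LLC2 {n : ℕ} (Ω : Set (Eu n)) : Prop :=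
  ∃ b : ℝ, b ∈ Set.Ioo (0:ℝ) 1 ∧ LLC2With Ω b

/-- `Ω` is an `Ṁ^{s,p}_ball`-extension domain. -/
def IsMballExtensionDomain {n : ℕ} (Ω : Set (Eu n)) (s p : ℝ) : Prop :=
  ∃ C : ℝ, 0 < C ∧ ∀ u : Eu n → ℝ, MemMball Ω s p u →
    ∃ v : Eu n → ℝ, MemMball (Set.univ) s p v ∧ (∀ x ∈ Ω, v x = u x) ∧
      ballNorm (Set.univ) s p v ≤ ENNReal.ofReal C * ballNorm Ω s p u

/-- `Ω` is a John domain: there are `x₀ ∈ Ω` and `C > 0` such that every `x ∈ Ω` is joined to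
`x₀` by a curve parametrized by arclength (here: `1`-Lipschitz) with
`dist(γ t, Ωᶜ) ≥ C t`. -/
def IsJohnDomain {n : ℕ} (Ω : Set (Eu n)) : Prop :=
  ∃ x₀ ∈ Ω, ∃ C : ℝ, 0 < C ∧ ∀ x ∈ Ω, ∃ ℓ : ℝ, 0 ≤ ℓ ∧ ∃ γ : ℝ → Eu n,
    LipschitzOnWith 1 γ (Set.Icc 0 ℓ) ∧ γ 0 = x ∧ γ ℓ = x₀ ∧
    ∀ t ∈ Set.Icc (0:ℝ) ℓ, γ t ∈ Ω ∧ C * t ≤ infDist (γ t) Ωᶜ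

/-- Quasihyperbolic distance: infimum over arclength-parametrized (`1`-Lipschitz) curves in `Ω`
joining `x` to `y` of `∫ dist(γ t, Ωᶜ)⁻¹ dt`. -/
def qhDist {n : ℕ} (Ω : Set (Eu n)) (x y : Eu n) : ℝ :=
  sInf { k : ℝ | ∃ ℓ : ℝ, 0 ≤ ℓ ∧ ∃ γ : ℝ → Eu n,
    LipschitzOnWith 1 γ (Set.Icc 0 ℓ) ∧ γ 0 = x ∧ γ ℓ = y ∧
    (∀ t ∈ Set.Icc (0:ℝ) ℓ, γ t ∈ Ω) ∧
    k = ∫ t in (0:ℝ)..ℓ, (infDist (γ t) Ωᶜ)⁻¹ }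

/-- Weak carrot domain (quasihyperbolic boundary condition). -/
def IsWeakCarrot {n : ℕ} (Ω : Set (Eu n)) : Prop :=
  ∃ x₀ ∈ Ω, ∃ C : ℝ, 1 ≤ C ∧ ∀ x ∈ Ω,
    qhDist Ω x x₀ ≤ C * Real.log (C / infDist x Ωᶜ)

/-- The Luxemburg norm `‖u‖_{φ_s(L)(Ω)}` with `φ_s(t) = exp(t^{n/(n-s)}) - 1`
(value `⊤` when no admissible `t` exists). -/
def phiLux {n : ℕ} (Ω : Set (Eu n)) (s : ℝ) (u : Eu n → ℝ) : ℝ≥0∞ :=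
  sInf (ENNReal.ofReal '' { t : ℝ | 0 < t ∧
    (∫⁻ x in Ω, ENNReal.ofReal
        (Real.exp ((|u x| / t) ^ ((n : ℝ) / ((n : ℝ) - s))) - 1)) ≤ 1 })

/-- `Ω` supports an `s`-Hajłasz–Trudinger imbedding. -/
def SupportsHT {n : ℕ} (Ω : Set (Eu n)) (s : ℝ) : Prop :=
  ∃ C : ℝ, 0 < C ∧ ∀ u : Eu n → ℝ, MemMball Ω s ((n : ℝ) / s) u →
    phiLux Ω s (fun x => u x - ⨍ y in Ω, u y)
      ≤ ENNReal.ofReal C * ballNorm Ω s ((n : ℝ) / s) u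

/-- The separation property with respect to `x₀` and `C`. -/
def SeparationProperty {n : ℕ} (Ω : Set (Eu n)) (x₀ : Eu n) (C : ℝ) : Prop :=
  ∀ x ∈ Ω, ∃ γ : ℝ → Eu n, ContinuousOn γ (Set.Icc 0 1) ∧
    (∀ t ∈ Set.Icc (0:ℝ) 1, γ t ∈ Ω) ∧ γ 0 = x ∧ γ 1 = x₀ ∧
    ∀ t ∈ Set.Ioc (0:ℝ) 1,
      γ '' Set.Icc 0 t ⊆ ball (γ t) (C * infDist (γ t) Ωᶜ) ∨
      ∀ y ∈ γ '' Set.Icc 0 t \ ball (γ t) (C * infDist (γ t) Ωᶜ),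
        connectedComponentIn (Ω \ sphere (γ t) (C * infDist (γ t) Ωᶜ)) y ≠
          connectedComponentIn (Ω \ sphere (γ t) (C * infDist (γ t) Ωᶜ)) x₀

/-- The slice property with constant `C`. Lengths of curve portions are measured via the
Lebesgue measure of parameter preimages of arclength (`1`-Lipschitz) parametrizations. -/
def SliceProperty {n : ℕ} (Ω : Set (Eu n)) (C : ℝ) : Prop :=
  ∀ x ∈ Ω, ∀ y ∈ Ω, ∃ (j : ℕ) (S : ℕ → Set (Eu n)) (L : ℝ) (γ : ℝ → Eu n),
    0 ≤ L ∧ LipschitzOnWith 1 γ (Set.Icc 0 L) ∧ γ 0 = x ∧ γ L = y ∧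
    (∀ t ∈ Set.Icc (0:ℝ) L, γ t ∈ Ω) ∧
    (∀ i ≤ j, IsOpen (S i) ∧ S i ⊆ Ω) ∧
    (∀ i ≤ j, ∀ k ≤ j, i ≠ k → Disjoint (S i) (S k)) ∧
    x ∈ S 0 ∧ y ∈ S j ∧
    (∀ i, 0 < i → i < j →
      connectedComponentIn (Ω \ closure (S i)) x ≠
        connectedComponentIn (Ω \ closure (S i)) y) ∧
    (∀ (LF : ℝ) (F : ℝ → Eu n), 0 ≤ LF → LipschitzOnWith 1 F (Set.Icc 0 LF) →
      F '' Set.Icc 0 LF ⊆ Ω → (∃ t ∈ Set.Icc (0:ℝ) LF, F t = x) →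
      (∃ t ∈ Set.Icc (0:ℝ) LF, F t = y) →
      ∀ i, 0 < i → i < j →
        Metric.diam (S i) ≤ C * (volume {t : ℝ | t ∈ Set.Icc (0:ℝ) LF ∧ F t ∈ S i}).toReal) ∧
    (∀ t ∈ Set.Icc (0:ℝ) L,
      ball (γ t) (C⁻¹ * infDist (γ t) Ωᶜ) ⊆ ⋃ i ∈ Finset.range (j + 1), S i) ∧
    (∀ i ≤ j, ∀ z ∈ γ '' Set.Icc (0:ℝ) L ∩ S i, Metric.diam (S i) ≤ C * infDist z Ωᶜ) ∧
    (∃ xi : ℕ → Eu n, xi 0 = x ∧ xi j = y ∧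
      ∀ i ≤ j, xi i ∈ S i ∧ ball (xi i) (C⁻¹ * infDist (xi i) Ωᶜ) ⊆ S i)

/-- `v : Ω → ℝⁿ` is a distributional gradient of `u` on `U`. -/
def HasDistribGradOn {n : ℕ} (U : Set (Eu n)) (u : Eu n → ℝ) (v : Eu n → Eu n) : Prop :=
  ∀ φ : Eu n → ℝ, ContDiff ℝ (⊤ : ℕ∞) φ → HasCompactSupport φ → tsupport φ ⊆ U →
    ∀ i : Fin n,
      ∫ x in U, u x * fderiv ℝ φ x (EuclideanSpace.single i 1) = - ∫ x in U, v x i * φ x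

/-- `u ∈ Ẇ^{1,p}(U)` with distributional gradient `v ∈ L^p(U;ℝⁿ)`. -/
def MemW1p {n : ℕ} (U : Set (Eu n)) (p : ℝ) (u : Eu n → ℝ) (v : Eu n → Eu n) : Prop :=
  LocallyIntegrableOn u U volume ∧ AEMeasurable v (volume.restrict U) ∧
    eLpNorm v (ENNReal.ofReal p) (volume.restrict U) < ⊤ ∧ HasDistribGradOn U u v

/-- `Ω` is a `Ẇ^{1,p}`-extension domain. -/
def IsW1pExtensionDomain {n : ℕ} (Ω : Set (Eu n)) (p : ℝ) : Prop :=
  ∃ C : ℝ, 0 < C ∧ ∀ u v, MemW1p Ω p u v →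
    ∃ u' v', MemW1p (Set.univ) p u' v' ∧ (∀ᵐ x ∂(volume.restrict Ω), u' x = u x) ∧
      eLpNorm v' (ENNReal.ofReal p) volume
        ≤ ENNReal.ofReal C * eLpNorm v (ENNReal.ofReal p) (volume.restrict Ω)

/-- The (uncentered over radii, centered) Hardy–Littlewood maximal function, `ℝ≥0∞`-valued. -/
def HLMax {n : ℕ} (g : Eu n → ℝ) (y : Eu n) : ℝ≥0∞ :=
  ⨆ (t : ℝ) (_ : 0 < t), (volume (ball y t))⁻¹ * ∫⁻ z in ball y t, ENNReal.ofReal |g z|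

/-- Lemma 3.1. The cut-off function `u` of a component `Ω_x` of
`Ω \ closure(B(z, b₀r))` admits `C ((b₁-b₀)r)^{-s} χ_{Ω_x ∩ B(z,r)}` as a Hajłasz gradient at
scale `1/8`, with `C` depending only on `n` and `s`. -/
theorem stmt13 {n : ℕ} (hn : 2 ≤ n) (s : ℝ) (hs : s ∈ Set.Ioc (0:ℝ) 1) :
    ∃ C : ℝ, 0 < C ∧
      ∀ (Ω : Set (Eu n)), IsDomainEu Ω → ∀ (z : Eu n) (r b₀ b₁ : ℝ),
        0 < r → 0 < b₀ → b₀ < b₁ → b₁ ≤ 1 → b₀ ≤ 1 / 2 → infDist z Ωᶜ ≤ b₀ * r →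
        ∀ Ωx : Set (Eu n),
          (∃ x', x' ∈ Ω \ closure (ball z (b₀ * r)) ∧
            Ωx = connectedComponentIn (Ω \ closure (ball z (b₀ * r))) x') →
        ∀ u : Eu n → ℝ,
          (∀ y ∈ Ω \ Ωx, u y = 0) →
          (∀ y ∈ Ωx ∩ ball z (b₁ * r),
            u y = infDist y (ball z (b₀ * r)) / ((b₁ - b₀) * r)) →
          (∀ y ∈ Ωx \ ball z (b₁ * r), u y = 1) →
        ∀ y ∈ Ω, ∀ w ∈ Ω, dist y w < infDist y Ωᶜ / 8 →
          |u y - u w| ≤ dist y w ^ s *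
            (C * ((b₁ - b₀) * r) ^ (-s) * (Ωx ∩ ball z r).indicator (fun _ => (1:ℝ)) y +
             C * ((b₁ - b₀) * r) ^ (-s) * (Ωx ∩ ball z r).indicator (fun _ => (1:ℝ)) w) := by

  obtain ⟨hs0, hs1⟩ := hs
  refine ⟨1, one_pos, ?_⟩
  intro Ω hΩ z r b₀ b₁ hr hb0 hb01 hb1 hbhalf hzd Ωx hΩxdef u hu0 humid hu1 y hy w hw hd
  obtain ⟨x', hx'mem, hΩxeq⟩ := hΩxdef
  set A := (b₁ - b₀) * r with hAdef
  have hA : (0:ℝ) < A := mul_pos (sub_pos.2 hb01) hr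
  have hb0r : (0:ℝ) < b₀ * r := mul_pos hb0 hr
  have hclos : closure (ball z (b₀ * r)) = closedBall z (b₀ * r) := closure_ball z hb0r.ne'
  set S := Ω \ closure (ball z (b₀ * r)) with hSdef
  have hSsub : Ωx ⊆ S := by rw [hΩxeq]; exact connectedComponentIn_subset _ _
  have hΩx_far : ∀ p ∈ Ωx, b₀ * r < dist p z := by
    intro p hp
    have h2 := (hSsub hp).2
    rw [hclos, mem_closedBall] at h2
    exact not_le.1 h2
  have hinf_ge : ∀ p : Eu n, dist p z - b₀ * r ≤ infDist p (ball z (b₀ * r)) := by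
    intro p
    rw [← infDist_closure, hclos]
    by_contra h
    push_neg at h
    obtain ⟨q, hq, hq2⟩ := (infDist_lt_iff ⟨z, mem_closedBall_self hb0r.le⟩).1 h
    rw [mem_closedBall] at hq
    have := dist_triangle p q z
    linarith
  have hinf_le : ∀ p : Eu n, b₀ * r ≤ dist p z →
      infDist p (ball z (b₀ * r)) ≤ dist p z - b₀ * r := by
    intro p hp
    rw [← infDist_closure, hclos]
    have hdz : (0:ℝ) < dist p z := lt_of_lt_of_le hb0r hp
    set c : ℝ := (b₀ * r) / dist p z with hc
    have hc0 : 0 ≤ c := div_nonneg hb0r.le hdz.le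
    have hc1 : c ≤ 1 := (div_le_one hdz).2 hp
    set q : Eu n := z + c • (p - z) with hq
    have hpz : ‖p - z‖ = dist p z := (dist_eq_norm p z).symm
    have hqz : dist q z = b₀ * r := by
      have h1 : q - z = c • (p - z) := by rw [hq]; abel
      rw [dist_eq_norm, h1, norm_smul, Real.norm_eq_abs, abs_of_nonneg hc0, hpz, hc,
        div_mul_cancel₀ _ hdz.ne']
    have hpq : dist p q = dist p z - b₀ * r := by
      have h1 : p - q = (1 - c) • (p - z) := by rw [hq, sub_smul, one_smul]; abel
      rw [dist_eq_norm, h1, norm_smul, Real.norm_eq_abs, abs_of_nonneg (by linarith), hpz,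
        sub_mul, one_mul, hc, div_mul_cancel₀ _ hdz.ne']
    calc infDist p (closedBall z (b₀ * r)) ≤ dist p q :=
          infDist_le_dist_of_mem (mem_closedBall.2 hqz.le)
      _ = dist p z - b₀ * r := hpq
  have humin : ∀ p ∈ Ωx, u p = min (infDist p (ball z (b₀ * r))) A / A := by
    intro p hp
    by_cases hpb : p ∈ ball z (b₁ * r)
    · rw [humid p ⟨hp, hpb⟩]
      have h1 := hinf_le p (hΩx_far p hp).le
      have h2 : dist p z < b₁ * r := mem_ball.1 hpb
      have h3 : infDist p (ball z (b₀ * r)) ≤ A := by rw [hAdef, sub_mul]; linarith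
      rw [min_eq_left h3]
    · rw [hu1 p ⟨hp, hpb⟩]
      have h2 : b₁ * r ≤ dist p z := by
        rw [mem_ball, not_lt] at hpb; exact hpb
      have h3 : A ≤ infDist p (ball z (b₀ * r)) :=
        le_trans (by rw [hAdef, sub_mul]; linarith) (hinf_ge p)
      rw [min_eq_right h3, div_self hA.ne']
  have hu_mem : ∀ p ∈ Ω, 0 ≤ u p ∧ u p ≤ 1 := by
    intro p hp
    by_cases hpx : p ∈ Ωx
    · rw [humin p hpx]
      exact ⟨div_nonneg (le_min infDist_nonneg hA.le) hA.le,
        div_le_one_of_le₀ (min_le_right _ _) hA.le⟩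
    · rw [hu0 p ⟨hp, hpx⟩]; exact ⟨le_refl 0, zero_le_one⟩
  have habs1 : |u y - u w| ≤ 1 := by
    obtain ⟨h1, h2⟩ := hu_mem y hy; obtain ⟨h3, h4⟩ := hu_mem w hw
    rw [abs_sub_le_iff]; constructor <;> linarith
  have hulip : ∀ p ∈ Ωx, ∀ q ∈ Ωx, |u p - u q| ≤ dist p q / A := by
    intro p hp q hq
    rw [humin p hp, humin q hq, div_sub_div_same, abs_div, abs_of_pos hA]
    gcongr
    calc |min (infDist p (ball z (b₀ * r))) A - min (infDist q (ball z (b₀ * r))) A|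
        ≤ max |infDist p (ball z (b₀ * r)) - infDist q (ball z (b₀ * r))| |A - A| :=
          abs_min_sub_min_le_max _ _ _ _
      _ ≤ dist p q := by
          rw [sub_self, abs_zero]
          refine max_le ?_ dist_nonneg
          rw [abs_sub_le_iff]
          constructor
          · linarith [infDist_le_infDist_add_dist (s := ball z (b₀ * r)) (x := p) (y := q)]
          · have := infDist_le_infDist_add_dist (s := ball z (b₀ * r)) (x := q) (y := p)
            rw [dist_comm q p] at this
            linarith
  have hseg_dist : ∀ p ∈ segment ℝ y w, dist y p ≤ dist y w ∧ dist p w ≤ dist y w := by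
    intro p hp
    have h := dist_add_dist_of_mem_segment hp
    constructor
    · linarith [dist_nonneg (x := p) (y := w)]
    · linarith [dist_nonneg (x := y) (y := p)]
  have hsegΩ : ∀ p ∈ segment ℝ y w, p ∈ Ω := by
    intro p hp
    by_contra hpn
    have h1 : infDist y Ωᶜ ≤ dist y p := infDist_le_dist_of_mem hpn
    have h2 := (hseg_dist p hp).1
    have h3 : (0:ℝ) ≤ infDist y Ωᶜ := infDist_nonneg
    linarith
  have key : min 1 (dist y w / A) ≤ dist y w ^ s * A ^ (-s) := by
    have hd0 : (0:ℝ) ≤ dist y w := dist_nonneg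
    have heq : dist y w ^ s * A ^ (-s) = (dist y w / A) ^ s := by
      rw [Real.rpow_neg hA.le, Real.div_rpow hd0 hA.le, div_eq_mul_inv]
    rw [heq]
    set t := dist y w / A with ht
    have ht0 : 0 ≤ t := div_nonneg hd0 hA.le
    rcases le_total t 1 with h | h
    · rw [min_eq_right h]
      rcases ht0.eq_or_lt with h0 | h0
      · rw [← h0, Real.zero_rpow hs0.ne']
      · calc t = t ^ (1:ℝ) := (Real.rpow_one t).symm
          _ ≤ t ^ s := Real.rpow_le_rpow_of_exponent_ge h0 h hs1
    · rw [min_eq_left h]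
      exact Real.one_le_rpow h hs0.le
  set i : Eu n → ℝ := (Ωx ∩ ball z r).indicator (fun _ => (1:ℝ)) with hi
  have hi_nonneg : ∀ p, 0 ≤ i p := fun p => Set.indicator_nonneg (fun _ _ => zero_le_one) p
  have hAneg : (0:ℝ) ≤ A ^ (-s) := Real.rpow_nonneg hA.le _
  have hfin : ∀ p, p ∈ Ωx ∩ ball z r → (p = y ∨ p = w) →
      |u y - u w| ≤ min 1 (dist y w / A) →
      |u y - u w| ≤ dist y w ^ s * (1 * A ^ (-s) * i y + 1 * A ^ (-s) * i w) := by
    intro p hp hpm hmin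
    have hip : i p = 1 := by rw [hi]; exact Set.indicator_of_mem hp _
    have hge : A ^ (-s) ≤ 1 * A ^ (-s) * i y + 1 * A ^ (-s) * i w := by
      rcases hpm with rfl | rfl
      · have h2 : 0 ≤ 1 * A ^ (-s) * i w :=
          mul_nonneg (mul_nonneg zero_le_one hAneg) (hi_nonneg w)
        rw [hip]; linarith
      · have h2 : 0 ≤ 1 * A ^ (-s) * i y :=
          mul_nonneg (mul_nonneg zero_le_one hAneg) (hi_nonneg y)
        rw [hip]; linarith
    calc |u y - u w| ≤ min 1 (dist y w / A) := hmin
      _ ≤ dist y w ^ s * A ^ (-s) := key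
      _ ≤ _ := mul_le_mul_of_nonneg_left hge (Real.rpow_nonneg dist_nonneg _)
  have hzero : u y = u w →
      |u y - u w| ≤ dist y w ^ s * (1 * A ^ (-s) * i y + 1 * A ^ (-s) * i w) := by
    intro h
    rw [h, sub_self, abs_zero]
    have h0 : (0:ℝ) ≤ dist y w ^ s := Real.rpow_nonneg dist_nonneg _
    have h1 : 0 ≤ 1 * A ^ (-s) * i y := mul_nonneg (mul_nonneg zero_le_one hAneg) (hi_nonneg y)
    have h2 : 0 ≤ 1 * A ^ (-s) * i w := mul_nonneg (mul_nonneg zero_le_one hAneg) (hi_nonneg w)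
    exact mul_nonneg h0 (by linarith)
  by_cases hmeet : ∃ p ∈ segment ℝ y w, p ∈ closure (ball z (b₀ * r))
  · obtain ⟨p, hpseg, hpcl⟩ := hmeet
    have hpz : dist p z ≤ b₀ * r := by rw [hclos, mem_closedBall] at hpcl; exact hpcl
    obtain ⟨hyp, hpw⟩ := hseg_dist p hpseg
    have hinfy : infDist y Ωᶜ ≤ dist y z + b₀ * r := by
      have := infDist_le_infDist_add_dist (x := y) (y := z) (s := Ωᶜ)
      linarith
    have hdyz : dist y z ≤ dist y w + b₀ * r := by
      have := dist_triangle y p z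
      linarith
    have hdsmall : dist y w < 2 / 7 * (b₀ * r) := by linarith
    have hb0half : b₀ * r ≤ 1 / 2 * r := mul_le_mul_of_nonneg_right hbhalf hr.le
    have hyball : y ∈ ball z r := by rw [mem_ball]; linarith
    have hwball : w ∈ ball z r := by
      rw [mem_ball]
      have h1 : dist w z ≤ dist w p + dist p z := dist_triangle w p z
      have h2 : dist w p = dist p w := dist_comm w p
      linarith
    by_cases hyx : y ∈ Ωx <;> by_cases hwx : w ∈ Ωx
    · exact hfin y ⟨hyx, hyball⟩ (Or.inl rfl) (le_min habs1 (hulip y hyx w hwx))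
    · have huw : u w = 0 := hu0 w ⟨hw, hwx⟩
      have huy : u y ≤ dist y w / A := by
        rw [humin y hyx]
        have h2 : infDist y (ball z (b₀ * r)) ≤ infDist p (ball z (b₀ * r)) + dist y p :=
          infDist_le_infDist_add_dist
        have h3 : infDist p (ball z (b₀ * r)) = 0 := infDist_zero_of_mem_closure hpcl
        have h1 : min (infDist y (ball z (b₀ * r))) A ≤ dist y w :=
          le_trans (min_le_left _ _) (by linarith)
        gcongr
      have habs : |u y - u w| ≤ dist y w / A := by
        rw [huw, sub_zero, abs_of_nonneg (hu_mem y hy).1]; exact huy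
      exact hfin y ⟨hyx, hyball⟩ (Or.inl rfl) (le_min habs1 habs)
    · have huy : u y = 0 := hu0 y ⟨hy, hyx⟩
      have huw : u w ≤ dist y w / A := by
        rw [humin w hwx]
        have h2 : infDist w (ball z (b₀ * r)) ≤ infDist p (ball z (b₀ * r)) + dist w p :=
          infDist_le_infDist_add_dist
        have h3 : infDist p (ball z (b₀ * r)) = 0 := infDist_zero_of_mem_closure hpcl
        have h4 : dist w p = dist p w := dist_comm w p
        have h1 : min (infDist w (ball z (b₀ * r))) A ≤ dist y w :=
          le_trans (min_le_left _ _) (by linarith)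
        gcongr
      have habs : |u y - u w| ≤ dist y w / A := by
        rw [huy, zero_sub, abs_neg, abs_of_nonneg (hu_mem w hw).1]; exact huw
      exact hfin w ⟨hwx, hwball⟩ (Or.inr rfl) (le_min habs1 habs)
    · exact hzero (by rw [hu0 y ⟨hy, hyx⟩, hu0 w ⟨hw, hwx⟩])
  · push_neg at hmeet
    have hsegS : segment ℝ y w ⊆ S := fun p hp => ⟨hsegΩ p hp, hmeet p hp⟩
    have hiff : y ∈ Ωx ↔ w ∈ Ωx := by
      constructor
      · intro hyx
        have h1 : segment ℝ y w ⊆ connectedComponentIn S y :=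
          (convex_segment y w).isPreconnected.subset_connectedComponentIn
            (left_mem_segment ℝ y w) hsegS
        have h2 : connectedComponentIn S y = Ωx := by
          have hyx' : y ∈ connectedComponentIn S x' := by rw [← hΩxeq]; exact hyx
          rw [hΩxeq]; exact (connectedComponentIn_eq hyx').symm 
        rw [← h2]; exact h1 (right_mem_segment ℝ y w)
      · intro hwx
        have h1 : segment ℝ y w ⊆ connectedComponentIn S w :=
          (convex_segment y w).isPreconnected.subset_connectedComponentIn
            (right_mem_segment ℝ y w) hsegS
        have h2 : connectedComponentIn S w = Ωx := by
          have hwx' : w ∈ connectedComponentIn S x' := by rw [← hΩxeq]; exact hwx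
          rw [hΩxeq]; exact (connectedComponentIn_eq hwx').symm 
        rw [← h2]; exact h1 (left_mem_segment ℝ y w)
    by_cases hyx : y ∈ Ωx
    · have hwx := hiff.1 hyx
      by_cases hball : y ∈ ball z r
      · exact hfin y ⟨hyx, hball⟩ (Or.inl rfl) (le_min habs1 (hulip y hyx w hwx))
      · by_cases hball2 : w ∈ ball z r
        · exact hfin w ⟨hwx, hball2⟩ (Or.inr rfl) (le_min habs1 (hulip y hyx w hwx))
        · have hb1r : ∀ q : Eu n, q ∉ ball z r → q ∉ ball z (b₁ * r) := by
            intro q hq hq2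
            rw [mem_ball] at hq2
            have hle : b₁ * r ≤ r := by nlinarith
            exact hq (mem_ball.2 (lt_of_lt_of_le hq2 hle))
          exact hzero (by rw [hu1 y ⟨hyx, hb1r y hball⟩, hu1 w ⟨hwx, hb1r w hball2⟩])
    · have hwx : w ∉ Ωx := fun h => hyx (hiff.2 h)
      exact hzero (by rw [hu0 y ⟨hy, hyx⟩, hu0 w ⟨hw, hwx⟩])
end
end

section
/- Let n ≥ 2 and s ∈ (0,1]. Let Ω ⊆ ℝⁿ be a domain, x₀ ∈ Ω, z ∈ ℝⁿ, r > 0 and b₀ ∈ (0,1]. Define v on Ω by v(y) := inf_γ length(γ ∩ B(z, b₀r)), where the infimum is taken over all rectifiable curves γ ⊆ Ω joining x₀ to y. Then there exists a constant C > 0, depending only on n and s (and not on Ω, x₀, z, b₀, r), such that the function h := C (b₀ r)^{1−s} · χ_{Ω ∩ B(z, b₀r)} satisfies |v(y) − v(w)| ≤ |y − w|^s (h(y) + h(w)) for all y, w ∈ Ω with |y − w| < dist(y, ℝⁿ \ Ω)/8. -/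
open MeasureTheory Metric Set
open scoped ENNReal RealInnerProductSpace

noncomputable section

section Aux

variable {n : ℕ}

lemma aux_mem_of_dist_lt_infDist {Ω : Set (Eu n)} {y p : Eu n}
    (h : dist y p < infDist y Ωᶜ) : p ∈ Ω := by
  by_contra hp
  exact absurd (infDist_le_dist_of_mem (show p ∈ Ωᶜ from hp)) (not_le.2 h)

def curveSet (Ω : Set (Eu n)) (x₀ z : Eu n) (ρ : ℝ) (y : Eu n) : Set ℝ :=
  {ℓv : ℝ | ∃ L : ℝ, 0 ≤ L ∧ ∃ γ : ℝ → Eu n,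
    LipschitzOnWith 1 γ (Set.Icc 0 L) ∧ γ 0 = x₀ ∧ γ L = y ∧
    (∀ t ∈ Set.Icc (0:ℝ) L, γ t ∈ Ω) ∧
    ℓv = (volume {t : ℝ | t ∈ Set.Icc (0:ℝ) L ∧ γ t ∈ ball z ρ}).toReal}

lemma curveSet_nonneg {Ω : Set (Eu n)} {x₀ z : Eu n} {ρ : ℝ} {y : Eu n} {a : ℝ}
    (ha : a ∈ curveSet Ω x₀ z ρ y) : 0 ≤ a := by
  obtain ⟨L, _, γ, _, _, _, _, rfl⟩ := ha
  exact ENNReal.toReal_nonneg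

lemma curveSet_bddBelow (Ω : Set (Eu n)) (x₀ z : Eu n) (ρ : ℝ) (y : Eu n) :
    BddBelow (curveSet Ω x₀ z ρ y) :=
  ⟨0, fun _ ha => curveSet_nonneg ha⟩

lemma concat_lip {L₁ L₂ : ℝ} (h₁ : 0 ≤ L₁) {γ₁ γ₂ : ℝ → Eu n}
    (hl₁ : LipschitzOnWith 1 γ₁ (Set.Icc 0 L₁)) (hl₂ : LipschitzOnWith 1 γ₂ (Set.Icc 0 L₂))
    (hj : γ₁ L₁ = γ₂ 0) :
    LipschitzOnWith 1 (fun t => if t ≤ L₁ then γ₁ t else γ₂ (t - L₁)) (Set.Icc 0 (L₁ + L₂)) := by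
  rw [lipschitzOnWith_iff_dist_le_mul] at hl₁ hl₂ ⊢
  simp only [NNReal.coe_one, one_mul] at hl₁ hl₂ ⊢
  have key : ∀ a b : ℝ, a ∈ Icc (0:ℝ) (L₁+L₂) → b ∈ Icc (0:ℝ) (L₁+L₂) → a ≤ b →
      dist (if a ≤ L₁ then γ₁ a else γ₂ (a - L₁)) (if b ≤ L₁ then γ₁ b else γ₂ (b - L₁))
        ≤ b - a := by
    intro a b ha hb hab
    by_cases h1 : a ≤ L₁
    · by_cases h2 : b ≤ L₁
      · rw [if_pos h1, if_pos h2]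
        have := hl₁ a ⟨ha.1, h1⟩ b ⟨hb.1, h2⟩
        rw [Real.dist_eq, abs_of_nonpos (by linarith)] at this; linarith
      · rw [if_pos h1, if_neg h2]
        have hA := hl₁ a ⟨ha.1, h1⟩ L₁ ⟨h₁, le_refl L₁⟩
        have hB := hl₂ 0 ⟨le_refl 0, by linarith [hb.2]⟩ (b - L₁) ⟨by linarith, by linarith [hb.2]⟩
        rw [Real.dist_eq, abs_of_nonpos (by linarith)] at hA
        rw [Real.dist_eq, abs_of_nonpos (by linarith)] at hB
        calc dist (γ₁ a) (γ₂ (b - L₁)) ≤ dist (γ₁ a) (γ₁ L₁) + dist (γ₂ 0) (γ₂ (b - L₁)) := by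
              rw [hj]; exact dist_triangle _ _ _
          _ ≤ b - a := by linarith
    · by_cases h2 : b ≤ L₁
      · exact absurd (hab.trans h2) h1
      · rw [if_neg h1, if_neg h2]
        have := hl₂ (a - L₁) ⟨by linarith, by linarith [ha.2]⟩ (b - L₁)
          ⟨by linarith, by linarith [hb.2]⟩
        rw [Real.dist_eq, show a - L₁ - (b - L₁) = a - b by ring,
          abs_of_nonpos (by linarith)] at this
        linarith
  intro t ht t' ht'
  rcases le_total t t' with h | h
  · have := key t t' ht ht' h
    rw [Real.dist_eq, abs_of_nonpos (by linarith)]; linarith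
  · have := key t' t ht' ht h
    rw [dist_comm] at this
    rw [Real.dist_eq, abs_of_nonneg (by linarith)]; linarith

lemma concat_prop {L₁ L₂ : ℝ} (h₁ : 0 ≤ L₁) {γ₁ γ₂ : ℝ → Eu n} (P : Eu n → Prop)
    (hp₁ : ∀ t ∈ Icc (0:ℝ) L₁, P (γ₁ t)) (hp₂ : ∀ t ∈ Icc (0:ℝ) L₂, P (γ₂ t)) :
    ∀ t ∈ Icc (0:ℝ) (L₁ + L₂), P ((fun t => if t ≤ L₁ then γ₁ t else γ₂ (t - L₁)) t) := by
  intro t ht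
  by_cases h : t ≤ L₁
  · simpa [h] using hp₁ t ⟨ht.1, h⟩
  · simp only [if_neg h]
    exact hp₂ (t - L₁) ⟨by linarith [not_le.1 h], by linarith [ht.2]⟩



section B
variable {n : ℕ}

/-- Unit-speed segment from `y` to `w` (for `y ≠ w`). -/
lemma seg_lemma {y w : Eu n} (hyw : y ≠ w) :
    ∃ γ : ℝ → Eu n, LipschitzOnWith 1 γ (Set.Icc 0 (dist y w)) ∧ γ 0 = y ∧
      γ (dist y w) = w ∧ (∀ t ∈ Icc (0:ℝ) (dist y w), dist y (γ t) ≤ t) ∧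
      (∀ t t' : ℝ, dist (γ t) (γ t') = dist t t') := by
  set d := dist y w with hd
  have hd0 : 0 < d := dist_pos.2 hyw
  refine ⟨fun t => y + (t / d) • (w - y), ?_, by simp, ?_, ?_, ?_⟩
  · rw [lipschitzOnWith_iff_dist_le_mul]
    intro t _ t' _
    simp only [NNReal.coe_one, one_mul, dist_eq_norm]
    rw [show y + (t / d) • (w - y) - (y + (t' / d) • (w - y)) = ((t - t')/d) • (w - y) by
      rw [← div_sub_div_same, sub_smul]; abel]
    rw [norm_smul, Real.norm_eq_abs, abs_div, abs_of_pos hd0,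
      show ‖w - y‖ = d by rw [hd, dist_eq_norm, norm_sub_rev]]
    rw [Real.norm_eq_abs, div_mul_cancel₀ _ hd0.ne']
  · show y + (d / d) • (w - y) = w
    rw [div_self hd0.ne', one_smul]; abel
  · intro t ht
    rw [dist_eq_norm, show y - (y + (t / d) • (w - y)) = -((t/d) • (w - y)) by abel,
      norm_neg, norm_smul, Real.norm_eq_abs, abs_div, abs_of_pos hd0,
      abs_of_nonneg ht.1, show ‖w - y‖ = d by rw [hd, dist_eq_norm, norm_sub_rev]]
    rw [div_mul_cancel₀ _ hd0.ne']
  · intro t t'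
    simp only [dist_eq_norm]
    rw [show y + (t / d) • (w - y) - (y + (t' / d) • (w - y)) = ((t - t')/d) • (w - y) by
      rw [← div_sub_div_same, sub_smul]; abel]
    rw [norm_smul, Real.norm_eq_abs, abs_div, abs_of_pos hd0,
      show ‖w - y‖ = d by rw [hd, dist_eq_norm, norm_sub_rev],
      Real.norm_eq_abs, div_mul_cancel₀ _ hd0.ne']

/-- Open connected sets are `1`-Lipschitz-path connected. -/
lemma exists_lip_path {Ω : Set (Eu n)} (hΩ : IsOpen Ω) (hconn : IsPreconnected Ω)
    {x₀ : Eu n} (hx₀ : x₀ ∈ Ω) {y : Eu n} (hy : y ∈ Ω) :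
    ∃ L : ℝ, 0 ≤ L ∧ ∃ γ : ℝ → Eu n, LipschitzOnWith 1 γ (Set.Icc 0 L) ∧ γ 0 = x₀ ∧
      γ L = y ∧ ∀ t ∈ Set.Icc (0:ℝ) L, γ t ∈ Ω := by
  set P : Eu n → Prop := fun p => ∃ L : ℝ, 0 ≤ L ∧ ∃ γ : ℝ → Eu n,
    LipschitzOnWith 1 γ (Set.Icc 0 L) ∧ γ 0 = x₀ ∧ γ L = p ∧
    ∀ t ∈ Set.Icc (0:ℝ) L, γ t ∈ Ω with hP
  -- extension step
  have hext : ∀ p ∈ Ω, P p → ∀ ε > 0, ball p ε ⊆ Ω → ∀ q ∈ ball p ε, P q := by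
    intro p hp hPp ε hε hball q hq
    by_cases hqp : q = p
    · exact hqp ▸ hPp
    obtain ⟨L, hL, γ, hγl, hγ0, hγL, hγΩ⟩ := hPp
    obtain ⟨σ, hσl, hσ0, hσd, hσdist, _⟩ := seg_lemma (fun h => hqp (h ▸ rfl) : p ≠ q)
    refine ⟨L + dist p q, by positivity, fun t => if t ≤ L then γ t else σ (t - L), ?_, ?_, ?_, ?_⟩
    · exact concat_lip hL hγl hσl (hγL.trans hσ0.symm)
    · simp [hL, hγ0]
    · have h1 : ¬(L + dist p q ≤ L) := by
        simp only [add_le_iff_nonpos_right, not_le]; exact dist_pos.2 (fun h => hqp h.symm)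
      simp only [if_neg h1, add_sub_cancel_left, hσd]
    · exact concat_prop hL (· ∈ Ω) hγΩ (fun t ht => hball (by
        rw [mem_ball, dist_comm]
        exact lt_of_le_of_lt (hσdist t ht) (lt_of_le_of_lt ht.2 (by rwa [mem_ball, dist_comm] at hq))))
  have hA : IsOpen {p | p ∈ Ω ∧ P p} := by
    rw [Metric.isOpen_iff]
    rintro p ⟨hp, hPp⟩
    obtain ⟨ε, hε, hball⟩ := Metric.isOpen_iff.1 hΩ p hp
    exact ⟨ε, hε, fun q hq => ⟨hball hq, hext p hp hPp ε hε hball q hq⟩⟩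
  have hA' : IsOpen {p | p ∈ Ω ∧ ¬ P p} := by
    rw [Metric.isOpen_iff]
    rintro p ⟨hp, hPp⟩
    obtain ⟨ε, hε, hball⟩ := Metric.isOpen_iff.1 hΩ p hp
    refine ⟨ε/2, by linarith, fun q hq => ⟨hball (ball_subset_ball (by linarith) hq),
      fun hPq => hPp ?_⟩⟩
    have hqball : p ∈ ball q (ε/2) := by rwa [mem_ball, dist_comm, ← mem_ball]
    refine hext q (hball (ball_subset_ball (by linarith) hq)) hPq (ε/2) (by linarith)
      (fun x hx => hball ?_) p hqball
    rw [mem_ball] at hx hq ⊢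
    calc dist x p ≤ dist x q + dist q p := dist_triangle _ _ _
      _ < ε := by linarith
  by_contra hy'
  obtain ⟨q, _, ⟨_, hq1⟩, _, hq2⟩ := hconn _ _ hA hA'
    (fun p hp => by by_cases h : P p; exacts [Or.inl ⟨hp, h⟩, Or.inr ⟨hp, h⟩])
    ⟨x₀, hx₀, hx₀, 0, le_refl 0, fun _ => x₀, ((LipschitzWith.const x₀).weaken zero_le_one).lipschitzOnWith,
      rfl, rfl, fun t _ => hx₀⟩
    ⟨y, hy, hy, hy'⟩
  exact hq2 hq1
end B

section C
variable {n : ℕ}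

lemma glue_lemma {Ω : Set (Eu n)} {x₀ z : Eu n} {ρ : ℝ} {y w : Eu n}
    (hne : (curveSet Ω x₀ z ρ y).Nonempty)
    {M c : ℝ} (hM : 0 ≤ M) {δ : ℝ → Eu n} (hδl : LipschitzOnWith 1 δ (Set.Icc 0 M))
    (hδ0 : δ 0 = y) (hδM : δ M = w) (hδΩ : ∀ t ∈ Icc (0:ℝ) M, δ t ∈ Ω)
    (hc : (volume {t : ℝ | t ∈ Icc (0:ℝ) M ∧ δ t ∈ ball z ρ}).toReal ≤ c) :
    sInf (curveSet Ω x₀ z ρ w) ≤ sInf (curveSet Ω x₀ z ρ y) + c := by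
  rw [← sub_le_iff_le_add]
  refine le_csInf hne ?_
  rintro a ⟨L, hL, γ, hγl, hγ0, hγL, hγΩ, rfl⟩
  rw [sub_le_iff_le_add]
  set F : ℝ → Eu n := fun t => if t ≤ L then γ t else δ (t - L) with hF
  have hjoin : γ L = δ 0 := by rw [hγL, hδ0]
  have hmem : (volume {t : ℝ | t ∈ Icc (0:ℝ) (L+M) ∧ F t ∈ ball z ρ}).toReal
      ∈ curveSet Ω x₀ z ρ w := by
    refine ⟨L + M, by linarith, F, concat_lip hL hγl hδl hjoin, ?_, ?_,
      concat_prop hL (· ∈ Ω) hγΩ hδΩ, rfl⟩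
    · simp [hF, hL, hγ0]
    · by_cases h : L + M ≤ L
      · have hM0 : M = 0 := le_antisymm (by linarith) hM
        simp only [hF, if_pos h]
        subst hM0
        rw [add_zero, hγL, ← hδ0]
        exact hδM
      · simp only [hF, if_neg h, add_sub_cancel_left, hδM]
  refine (csInf_le (curveSet_bddBelow _ _ _ _ _) hmem).trans ?_
  set A := volume {t : ℝ | t ∈ Icc (0:ℝ) L ∧ γ t ∈ ball z ρ} with hA
  set B := volume {t : ℝ | t ∈ Icc (0:ℝ) M ∧ δ t ∈ ball z ρ} with hB
  have hsub : {t : ℝ | t ∈ Icc (0:ℝ) (L+M) ∧ F t ∈ ball z ρ} ⊆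
      {t : ℝ | t ∈ Icc (0:ℝ) L ∧ γ t ∈ ball z ρ} ∪
      ((fun t => t + (-L)) ⁻¹' {t : ℝ | t ∈ Icc (0:ℝ) M ∧ δ t ∈ ball z ρ}) := by
    rintro t ⟨⟨ht0, htL⟩, htb⟩
    by_cases h : t ≤ L
    · left; exact ⟨⟨ht0, h⟩, by simpa [hF, if_pos h] using htb⟩
    · right
      have h1 : (0:ℝ) ≤ t + -L := by linarith [not_le.1 h]
      have h2 : t + -L ≤ M := by linarith
      exact ⟨⟨h1, h2⟩, by show δ (t + -L) ∈ ball z ρ; rw [← sub_eq_add_neg]; simpa [hF, if_neg h] using htb⟩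
  have hAfin : A ≠ ⊤ := by
    refine (lt_of_le_of_lt (measure_mono (fun t ht => ht.1)) ?_).ne
    rw [Real.volume_Icc]; exact ENNReal.ofReal_lt_top
  have hBfin : B ≠ ⊤ := by
    refine (lt_of_le_of_lt (measure_mono (fun t ht => ht.1)) ?_).ne
    rw [Real.volume_Icc]; exact ENNReal.ofReal_lt_top
  have hle : volume {t : ℝ | t ∈ Icc (0:ℝ) (L+M) ∧ F t ∈ ball z ρ} ≤ A + B := by
    refine (measure_mono hsub).trans ?_
    refine (measure_union_le _ _).trans ?_
    rw [measure_preimage_add_right]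
  have hm := ENNReal.toReal_mono (ENNReal.add_ne_top.2 ⟨hAfin, hBfin⟩) hle
  rw [ENNReal.toReal_add hAfin hBfin] at hm
  have hBr : B.toReal ≤ c := hc
  linarith

end C
section D
variable {n : ℕ}

lemma exists_unit_orth (hn : 2 ≤ n) (u : Eu n) :
    ∃ e : Eu n, ‖e‖ = 1 ∧ ⟪u, e⟫ = 0 := by
  have hne : (ℝ ∙ u)ᗮ ≠ ⊥ := by
    intro hbot
    have htop : (ℝ ∙ u) = ⊤ := Submodule.orthogonal_eq_bot_iff.1 hbot
    have h2 : Module.finrank ℝ (Eu n) = n := finrank_euclideanSpace_fin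
    by_cases hu : u = 0
    · rw [hu] at htop
      simp only [Submodule.span_zero_singleton] at htop
      have := finrank_bot ℝ (Eu n)
      rw [htop, finrank_top, h2] at this
      omega
    · have h1 := finrank_span_singleton (K := ℝ) hu
      rw [htop, finrank_top, h2] at h1
      omega
  obtain ⟨e₀, he₀K, he₀⟩ := Submodule.exists_mem_ne_zero_of_ne_bot hne
  refine ⟨‖e₀‖⁻¹ • e₀, norm_smul_inv_norm he₀, ?_⟩
  rw [real_inner_smul_right]
  rw [(Submodule.mem_orthogonal _ _).1 he₀K u (Submodule.mem_span_singleton_self u), mul_zero]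

end D
section E
variable {n : ℕ}

lemma aux_norm_add_smul {a e : Eu n} {ρ c : ℝ} (hρ : 0 ≤ ρ) (ha : ρ ≤ ‖a‖)
    (hae : 0 ≤ ⟪a, e⟫) (hen : ‖e‖ = 1) (hc : 0 ≤ c) : ρ ≤ ‖a + c • e‖ := by
  have h2 : ‖a + c • e‖^2 = ‖a‖^2 + 2 * (c * ⟪a, e⟫) + c^2 := by
    rw [norm_add_sq_real, real_inner_smul_right, norm_smul, Real.norm_eq_abs, hen, mul_one,
      sq_abs]
  nlinarith [norm_nonneg (a + c • e), norm_nonneg a, mul_nonneg hc hae]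

lemma detour_bent {Ω : Set (Eu n)} {z y w : Eu n} {ρ : ℝ} (hn : 2 ≤ n) (hρ : 0 < ρ)
    (hd : 0 < dist y w) (hcase : ρ ≤ dist y w)
    (hyz : ρ ≤ dist y z) (hwz : ρ ≤ dist w z)
    (hΩ : ∀ p : Eu n, dist y p ≤ 2 * dist y w → p ∈ Ω) :
    ∃ M : ℝ, 0 ≤ M ∧ ∃ δ : ℝ → Eu n, LipschitzOnWith 1 δ (Set.Icc 0 M) ∧
      δ 0 = y ∧ δ M = w ∧ ∀ t ∈ Icc (0:ℝ) M, δ t ∈ Ω ∧ δ t ∉ ball z ρ := by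
  set d := dist y w with hdd
  obtain ⟨e₁, he₁n, he₁o⟩ := exists_unit_orth hn (w - y)
  obtain ⟨e, hen, heo, hez⟩ : ∃ e : Eu n, ‖e‖ = 1 ∧ ⟪w - y, e⟫ = 0 ∧ ⟪z - y, e⟫ ≤ 0 := by
    rcases le_or_gt ⟪z - y, e₁⟫ 0 with h | h
    · exact ⟨e₁, he₁n, he₁o, h⟩
    · exact ⟨-e₁, by simpa using he₁n, by rw [inner_neg_right, he₁o, neg_zero],
        by rw [inner_neg_right]; linarith⟩
  have hyze : 0 ≤ ⟪y - z, e⟫ := by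
    have h : ⟪y - z, e⟫ = -⟪z - y, e⟫ := by
      rw [← inner_neg_left]; congr 1; abel
    rw [h]; linarith
  have hwze : 0 ≤ ⟪w - z, e⟫ := by
    have h : ⟪w - z, e⟫ = ⟪w - y, e⟫ + ⟪y - z, e⟫ := by
      rw [← inner_add_left]; congr 1; abel
    rw [h, heo]; linarith
  set γ₁ : ℝ → Eu n := fun t => y + t • e with hγ₁
  set γ₂ : ℝ → Eu n := fun t => (y + ρ • e) + (t / d) • (w - y) with hγ₂
  set γ₃ : ℝ → Eu n := fun t => w + (ρ - t) • e with hγ₃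
  have hl₁ : LipschitzOnWith 1 γ₁ (Icc 0 ρ) := by
    rw [lipschitzOnWith_iff_dist_le_mul]
    intro t _ t' _
    simp only [NNReal.coe_one, one_mul, dist_eq_norm, hγ₁]
    rw [show y + t • e - (y + t' • e) = (t - t') • e by rw [sub_smul]; abel,
      norm_smul, hen, mul_one]
  have hl₂ : LipschitzOnWith 1 γ₂ (Icc 0 d) := by
    rw [lipschitzOnWith_iff_dist_le_mul]
    intro t _ t' _
    simp only [NNReal.coe_one, one_mul, dist_eq_norm, hγ₂]
    rw [show (y + ρ • e) + (t / d) • (w - y) - ((y + ρ • e) + (t' / d) • (w - y))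
        = ((t - t') / d) • (w - y) by rw [← div_sub_div_same, sub_smul]; abel,
      norm_smul, Real.norm_eq_abs, abs_div, abs_of_pos hd,
      show ‖w - y‖ = d by rw [hdd, dist_eq_norm, norm_sub_rev],
      Real.norm_eq_abs, div_mul_cancel₀ _ hd.ne']
  have hl₃ : LipschitzOnWith 1 γ₃ (Icc 0 ρ) := by
    rw [lipschitzOnWith_iff_dist_le_mul]
    intro t _ t' _
    simp only [NNReal.coe_one, one_mul, dist_eq_norm, hγ₃]
    rw [show w + (ρ - t) • e - (w + (ρ - t') • e) = (t' - t) • e by module,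
      norm_smul, hen, mul_one, Real.norm_eq_abs, Real.norm_eq_abs, abs_sub_comm]
  have hp₁ : ∀ t ∈ Icc (0:ℝ) ρ, γ₁ t ∈ Ω ∧ γ₁ t ∉ ball z ρ := by
    intro t ht
    constructor
    · refine hΩ _ ?_
      rw [dist_eq_norm, hγ₁, show y - (y + t • e) = -(t • e) by abel, norm_neg,
        norm_smul, hen, mul_one, Real.norm_eq_abs, abs_of_nonneg ht.1]
      calc t ≤ ρ := ht.2
        _ ≤ d := hcase
        _ ≤ 2 * d := by linarith
    · have : ρ ≤ ‖γ₁ t - z‖ := by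
        rw [hγ₁, show y + t • e - z = (y - z) + t • e by abel]
        refine aux_norm_add_smul hρ.le ?_ hyze hen ht.1
        rw [← dist_eq_norm]; exact hyz
      simp only [mem_ball, dist_eq_norm, not_lt]
      exact this
  have hp₃ : ∀ t ∈ Icc (0:ℝ) ρ, γ₃ t ∈ Ω ∧ γ₃ t ∉ ball z ρ := by
    intro t ht
    constructor
    · refine hΩ _ ?_
      calc dist y (γ₃ t) ≤ dist y w + dist w (γ₃ t) := dist_triangle _ _ _
        _ ≤ d + ρ := by
            refine add_le_add le_rfl ?_
            rw [dist_eq_norm, hγ₃, show w - (w + (ρ - t) • e) = -((ρ - t) • e) by abel,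
              norm_neg, norm_smul, hen, mul_one, Real.norm_eq_abs,
              abs_of_nonneg (by linarith [ht.2] : (0:ℝ) ≤ ρ - t)]
            linarith [ht.1]
        _ ≤ 2 * d := by linarith
    · have : ρ ≤ ‖γ₃ t - z‖ := by
        rw [hγ₃, show w + (ρ - t) • e - z = (w - z) + (ρ - t) • e by abel]
        refine aux_norm_add_smul hρ.le ?_ hwze hen (by linarith [ht.2])
        rw [← dist_eq_norm]; exact hwz
      simp only [mem_ball, dist_eq_norm, not_lt]
      exact this
  have hp₂ : ∀ t ∈ Icc (0:ℝ) d, γ₂ t ∈ Ω ∧ γ₂ t ∉ ball z ρ := by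
    intro t ht
    constructor
    · refine hΩ _ ?_
      rw [dist_eq_norm, hγ₂,
        show y - ((y + ρ • e) + (t / d) • (w - y)) = -(ρ • e + (t / d) • (w - y)) by abel,
        norm_neg]
      calc ‖ρ • e + (t / d) • (w - y)‖ ≤ ‖ρ • e‖ + ‖(t / d) • (w - y)‖ := norm_add_le _ _
        _ ≤ ρ + t := by
            rw [norm_smul, hen, mul_one, Real.norm_eq_abs, abs_of_pos hρ, norm_smul,
              Real.norm_eq_abs, abs_div, abs_of_pos hd, abs_of_nonneg ht.1,
              show ‖w - y‖ = d by rw [hdd, dist_eq_norm, norm_sub_rev],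
              div_mul_cancel₀ _ hd.ne']
        _ ≤ 2 * d := by linarith [ht.2]
    · have hinner : ρ ≤ ⟪γ₂ t - z, e⟫ := by
        rw [hγ₂, show (y + ρ • e) + (t / d) • (w - y) - z
            = (y - z) + (ρ • e + (t / d) • (w - y)) by abel,
          inner_add_left, inner_add_left, real_inner_smul_left, real_inner_smul_left,
          real_inner_self_eq_norm_sq, hen, heo]
        ring_nf
        nlinarith [hyze]
      have : ρ ≤ ‖γ₂ t - z‖ := by
        calc ρ ≤ ⟪γ₂ t - z, e⟫ := hinner
          _ ≤ ‖γ₂ t - z‖ * ‖e‖ := real_inner_le_norm _ _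
          _ = ‖γ₂ t - z‖ := by rw [hen, mul_one]
      simp only [mem_ball, dist_eq_norm, not_lt]
      exact this
  -- assemble
  set F₂ : ℝ → Eu n := fun t => if t ≤ d then γ₂ t else γ₃ (t - d) with hF₂
  have hj₂ : γ₂ d = γ₃ 0 := by
    rw [hγ₂, hγ₃]
    simp only [div_self hd.ne', one_smul, sub_zero]
    abel
  have hj₁ : γ₁ ρ = γ₂ 0 := by
    rw [hγ₁, hγ₂]
    simp only [zero_div, zero_smul, add_zero]
  have hF₂l : LipschitzOnWith 1 F₂ (Icc 0 (d + ρ)) := concat_lip hd.le hl₂ hl₃ hj₂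
  have hF₂p : ∀ t ∈ Icc (0:ℝ) (d + ρ), F₂ t ∈ Ω ∧ F₂ t ∉ ball z ρ :=
    concat_prop hd.le (fun p => p ∈ Ω ∧ p ∉ ball z ρ) hp₂ hp₃
  have hj₁' : γ₁ ρ = F₂ 0 := by
    rw [hF₂]; simp only [if_pos hd.le]; exact hj₁
  refine ⟨ρ + (d + ρ), by positivity, fun t => if t ≤ ρ then γ₁ t else F₂ (t - ρ),
    concat_lip hρ.le hl₁ hF₂l hj₁', ?_, ?_, concat_prop hρ.le (fun p => p ∈ Ω ∧ p ∉ ball z ρ) hp₁ hF₂p⟩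
  · simp only [if_pos hρ.le, hγ₁, zero_smul, add_zero]
  · have h1 : ¬(ρ + (d + ρ) ≤ ρ) := by linarith
    simp only [if_neg h1, add_sub_cancel_left, hF₂]
    have h2 : ¬(d + ρ ≤ d) := by linarith
    simp only [if_neg h2, add_sub_cancel_left, hγ₃, sub_self, zero_smul, add_zero]

end E
section F
variable {n : ℕ}

lemma aux_unit_diff {a b : Eu n} {c : ℝ} (hc : 0 < c) (ha : c ≤ ‖a‖) (hb : c ≤ ‖b‖) :
    ‖‖a‖⁻¹ • a - ‖b‖⁻¹ • b‖ ≤ 2 / c * ‖a - b‖ := by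
  have hna : 0 < ‖a‖ := lt_of_lt_of_le hc ha
  have hnb : 0 < ‖b‖ := lt_of_lt_of_le hc hb
  have key : ‖a‖⁻¹ • a - ‖b‖⁻¹ • b = ‖a‖⁻¹ • (a - b) + (‖a‖⁻¹ - ‖b‖⁻¹) • b := by
    rw [smul_sub, sub_smul]; abel
  rw [key]
  refine (norm_add_le _ _).trans ?_
  rw [norm_smul, norm_smul, Real.norm_eq_abs, Real.norm_eq_abs, abs_of_pos (by positivity)]
  have h2 : |‖a‖⁻¹ - ‖b‖⁻¹| * ‖b‖ ≤ ‖a - b‖ / ‖a‖ := by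
    rw [inv_sub_inv hna.ne' hnb.ne', abs_div, abs_mul, abs_of_pos hna, abs_of_pos hnb]
    rw [div_mul_eq_mul_div, div_le_div_iff₀ (by positivity) hna]
    have habs : |‖b‖ - ‖a‖| ≤ ‖a - b‖ := by
      rw [abs_sub_comm]; exact abs_norm_sub_norm_le a b
    calc |‖b‖ - ‖a‖| * ‖b‖ * ‖a‖ ≤ ‖a - b‖ * ‖b‖ * ‖a‖ := by
          exact mul_le_mul_of_nonneg_right (mul_le_mul_of_nonneg_right habs hnb.le) hna.le
      _ = ‖a - b‖ * (‖a‖ * ‖b‖) := by ring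
  have h3 : ‖a‖⁻¹ * ‖a - b‖ ≤ ‖a - b‖ / ‖a‖ := by rw [inv_mul_eq_div]
  have h4 : ‖a - b‖ / ‖a‖ ≤ ‖a - b‖ / c := by
    exact div_le_div_of_nonneg_left (norm_nonneg _) hc ha
  calc ‖a‖⁻¹ * ‖a - b‖ + |‖a‖⁻¹ - ‖b‖⁻¹| * ‖b‖ ≤ ‖a - b‖ / c + ‖a - b‖ / c := by
        refine add_le_add (h3.trans h4) (h2.trans h4)
    _ = 2 / c * ‖a - b‖ := by ring

lemma detour_proj {Ω : Set (Eu n)} {z y w : Eu n} {ρ : ℝ} (hρ : 0 < ρ)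
    (hd : 0 < dist y w) (hcase : dist y w < ρ)
    (hyz : ρ ≤ dist y z) (hwz : ρ ≤ dist w z)
    (hΩ : ∀ p : Eu n, dist y p ≤ 2 * dist y w → p ∈ Ω) :
    ∃ M : ℝ, 0 ≤ M ∧ ∃ δ : ℝ → Eu n, LipschitzOnWith 1 δ (Set.Icc 0 M) ∧
      δ 0 = y ∧ δ M = w ∧ ∀ t ∈ Icc (0:ℝ) M, δ t ∈ Ω ∧ δ t ∉ ball z ρ := by
  set d := dist y w with hdd
  set c : ℝ := ρ - d with hcc
  have hc : 0 < c := by rw [hcc]; linarith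
  set K : ℝ := 2 + 2 * d / c with hKK
  have hK : 0 < K := by
    have : 0 ≤ 2 * d / c := by positivity
    rw [hKK]; linarith
  have hyw : y ≠ w := by
    intro h
    rw [hdd, h, dist_self] at hd
    exact lt_irrefl _ hd
  obtain ⟨σ, hσl, hσ0, hσd, hσdist, hσiso⟩ := seg_lemma hyw
  have hunit : ∀ v : Eu n, 0 < ‖v‖ → ‖‖v‖⁻¹ • v‖ = 1 := by
    intro v hv
    rw [norm_smul, Real.norm_eq_abs, abs_of_pos (by positivity), inv_mul_cancel₀ hv.ne']
  have smul_key : ∀ (p q u v : Eu n) (α β : ℝ),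
      (p + α • u) - (q + β • v) = (p - q) + ((α - β) • u + β • (u - v)) := by
    intro p q u v α β
    rw [sub_smul, smul_sub]; abel
  set f : Eu n → ℝ := fun x => max (ρ - dist x z) 0 with hf
  set G : Eu n → Eu n := fun x => x + f x • (‖x - z‖⁻¹ • (x - z)) with hG
  -- basic facts about G
  have hfnn : ∀ x, 0 ≤ f x := fun x => le_max_right _ _
  have hfle : ∀ x : Eu n, c ≤ dist x z → f x ≤ d := by
    intro x hx
    exact max_le (by rw [hcc] at hx; linarith) hd.le
  have hGeq : ∀ x : Eu n, ρ ≤ dist x z → G x = x := by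
    intro x hx
    rw [hG]
    simp only
    rw [hf]
    simp only [max_eq_right (by linarith : ρ - dist x z ≤ 0), zero_smul, add_zero]
  have hGz : ∀ x : Eu n, c ≤ dist x z → ρ ≤ dist (G x) z := by
    intro x hx
    have hxz : (0:ℝ) < ‖x - z‖ := by rw [← dist_eq_norm]; linarith
    have hrepr : G x - z = (1 + f x * ‖x - z‖⁻¹) • (x - z) := by
      rw [hG]; simp only
      rw [add_smul, one_smul, mul_smul]
      abel
    rw [dist_eq_norm, hrepr, norm_smul, Real.norm_eq_abs,
      abs_of_pos (by positivity : (0:ℝ) < 1 + f x * ‖x - z‖⁻¹)]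
    have expand : (1 + f x * ‖x - z‖⁻¹) * ‖x - z‖ = ‖x - z‖ + f x := by
      field_simp
    rw [expand]
    have h1 : ρ - dist x z ≤ f x := le_max_left _ _
    rw [← dist_eq_norm]
    linarith
  have hGd : ∀ x : Eu n, c ≤ dist x z → dist x (G x) ≤ d := by
    intro x hx
    have hxz : (0:ℝ) < ‖x - z‖ := by rw [← dist_eq_norm]; linarith
    rw [dist_eq_norm, hG]
    simp only
    rw [show x - (x + f x • (‖x - z‖⁻¹ • (x - z))) = -(f x • (‖x - z‖⁻¹ • (x - z))) by abel,
      norm_neg, norm_smul, Real.norm_eq_abs, abs_of_nonneg (hfnn x),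
      hunit _ hxz, mul_one]
    exact hfle x hx
  have hGlip : ∀ x x' : Eu n, c ≤ dist x z → c ≤ dist x' z →
      ‖G x - G x'‖ ≤ K * ‖x - x'‖ := by
    intro x x' hx hx'
    have hxz : (0:ℝ) < ‖x - z‖ := by rw [← dist_eq_norm]; linarith
    have hxz' : (0:ℝ) < ‖x' - z‖ := by rw [← dist_eq_norm]; linarith
    have hca : c ≤ ‖x - z‖ := by rw [← dist_eq_norm]; linarith
    have hcb : c ≤ ‖x' - z‖ := by rw [← dist_eq_norm]; linarith
    set ua : Eu n := ‖x - z‖⁻¹ • (x - z) with hua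
    set ub : Eu n := ‖x' - z‖⁻¹ • (x' - z) with hub
    have huan : ‖ua‖ = 1 := hunit _ hxz
    have key : G x - G x' = (x - x') + ((f x - f x') • ua + f x' • (ua - ub)) :=
      smul_key x x' ua ub (f x) (f x')
    rw [key]
    have hfd : |f x - f x'| ≤ ‖x - x'‖ := by
      have h1 : |max (ρ - dist x z) 0 - max (ρ - dist x' z) 0|
          ≤ |(ρ - dist x z) - (ρ - dist x' z)| := abs_max_sub_max_le_abs _ _ _
      have h2 : |(ρ - dist x z) - (ρ - dist x' z)| = |dist x' z - dist x z| := by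
        congr 1; ring
      have h3 : |dist x' z - dist x z| ≤ dist x' x := abs_dist_sub_le _ _ _
      rw [hf]
      calc |max (ρ - dist x z) 0 - max (ρ - dist x' z) 0| ≤ |dist x' z - dist x z| := by
            rw [← h2]; exact h1
        _ ≤ dist x' x := h3
        _ = ‖x - x'‖ := by rw [dist_comm, dist_eq_norm]
    have hud : ‖ua - ub‖ ≤ 2 / c * ‖x - x'‖ := by
      have := aux_unit_diff hc hca hcb
      rw [show x - z - (x' - z) = x - x' by abel] at this
      exact this
    calc ‖(x - x') + ((f x - f x') • ua + f x' • (ua - ub))‖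
        ≤ ‖x - x'‖ + (‖(f x - f x') • ua‖ + ‖f x' • (ua - ub)‖) := by
          refine (norm_add_le _ _).trans ?_
          exact add_le_add le_rfl (norm_add_le _ _)
      _ ≤ ‖x - x'‖ + (‖x - x'‖ + d * (2 / c * ‖x - x'‖)) := by
          refine add_le_add le_rfl (add_le_add ?_ ?_)
          · rw [norm_smul, Real.norm_eq_abs, huan, mul_one]; exact hfd
          · rw [norm_smul, Real.norm_eq_abs, abs_of_nonneg (hfnn x')]
            exact mul_le_mul (hfle x' hx') hud (norm_nonneg _) hd.le
      _ = K * ‖x - x'‖ := by rw [hKK]; field_simp; ring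
  -- points on the segment are at distance ≥ c from z
  have hσz : ∀ t ∈ Icc (0:ℝ) d, c ≤ dist (σ t) z := by
    intro t ht
    have h1 : dist y (σ t) ≤ d := (hσdist t ht).trans ht.2
    have h2 : dist y z ≤ dist y (σ t) + dist (σ t) z := dist_triangle _ _ _
    rw [hcc]; linarith
  refine ⟨K * d, by positivity, fun t => G (σ (t / K)), ?_, ?_, ?_, ?_⟩
  · rw [lipschitzOnWith_iff_dist_le_mul]
    intro t ht t' ht'
    simp only [NNReal.coe_one, one_mul]
    have htm : t / K ∈ Icc (0:ℝ) d := by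
      constructor
      · exact div_nonneg ht.1 hK.le
      · rw [div_le_iff₀ hK]; linarith [ht.2, mul_comm K d]
    have htm' : t' / K ∈ Icc (0:ℝ) d := by
      constructor
      · exact div_nonneg ht'.1 hK.le
      · rw [div_le_iff₀ hK]; linarith [ht'.2, mul_comm K d]
    calc dist (G (σ (t / K))) (G (σ (t' / K)))
        ≤ K * ‖σ (t / K) - σ (t' / K)‖ := by
          rw [dist_eq_norm]
          exact hGlip _ _ (hσz _ htm) (hσz _ htm')
      _ = K * dist (t / K) (t' / K) := by rw [← dist_eq_norm, hσiso]
      _ = dist t t' := by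
          rw [Real.dist_eq, Real.dist_eq, div_sub_div_same, abs_div, abs_of_pos hK]
          field_simp
  · show G (σ (0 / K)) = y
    rw [zero_div, hσ0, hGeq y hyz]
  · show G (σ (K * d / K)) = w
    rw [mul_div_cancel_left₀ _ hK.ne', hdd, hσd, hGeq w hwz]
  · intro t ht
    have htm : t / K ∈ Icc (0:ℝ) d := by
      constructor
      · exact div_nonneg ht.1 hK.le
      · rw [div_le_iff₀ hK]; linarith [ht.2, mul_comm K d]
    have hcz := hσz _ htm
    constructor
    · refine hΩ _ ?_
      calc dist y (G (σ (t / K))) ≤ dist y (σ (t / K)) + dist (σ (t / K)) (G (σ (t / K))) :=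
            dist_triangle _ _ _
        _ ≤ d + d := add_le_add ((hσdist _ htm).trans htm.2) (hGd _ hcz)
        _ = 2 * d := by ring
    · simp only [mem_ball, not_lt]
      exact hGz _ hcz
end F
section G
variable {n : ℕ}

lemma seg_measure_bound {z : Eu n} {ρ dlen : ℝ} (hρ : 0 < ρ) {γ : ℝ → Eu n}
    (hiso : ∀ t t' : ℝ, dist (γ t) (γ t') = dist t t') (h0 : 0 ≤ dlen) :
    (volume {t : ℝ | t ∈ Icc (0:ℝ) dlen ∧ γ t ∈ ball z ρ}).toReal ≤ min dlen (4 * ρ) := by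
  set T := {t : ℝ | t ∈ Icc (0:ℝ) dlen ∧ γ t ∈ ball z ρ} with hT
  refine le_min ?_ ?_
  · have h1 : volume T ≤ ENNReal.ofReal dlen := by
      refine (measure_mono (fun t ht => ht.1)).trans ?_
      rw [Real.volume_Icc, sub_zero]
    exact (ENNReal.toReal_mono ENNReal.ofReal_ne_top h1).trans (ENNReal.toReal_ofReal h0).le
  · rcases eq_empty_or_nonempty T with h | ⟨t₀, ht₀⟩
    · rw [h]
      simp only [measure_empty, ENNReal.toReal_zero]
      positivity
    · have hsub : T ⊆ Ioo (t₀ - 2*ρ) (t₀ + 2*ρ) := by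
        rintro t ⟨htI, htb⟩
        have h1 : dist (γ t) (γ t₀) < 2 * ρ := by
          calc dist (γ t) (γ t₀) ≤ dist (γ t) z + dist z (γ t₀) := dist_triangle _ _ _
            _ < ρ + ρ := add_lt_add (mem_ball.1 htb) (by rw [dist_comm]; exact mem_ball.1 ht₀.2)
            _ = 2 * ρ := by ring
        rw [hiso t t₀, Real.dist_eq] at h1
        obtain ⟨ha, hb⟩ := abs_lt.1 h1
        exact ⟨by linarith, by linarith⟩
      have h2 : volume T ≤ ENNReal.ofReal (4 * ρ) := by
        refine (measure_mono hsub).trans ?_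
        rw [Real.volume_Ioo]
        exact ENNReal.ofReal_le_ofReal (by linarith)
      exact (ENNReal.toReal_mono ENNReal.ofReal_ne_top h2).trans
        (ENNReal.toReal_ofReal (by positivity)).le

end G

end Aux

/-- Lemma 3.2. The function `v(y) = inf_γ ℓ(γ ∩ B(z, b₀r))` (infimum over
arclength-parametrized curves in `Ω` from `x₀` to `y`) admits
`C (b₀r)^{1-s} χ_{Ω ∩ B(z, b₀r)}` as a Hajłasz gradient at scale `1/8`, with `C` depending
only on `n` and `s`. -/
theorem stmt14 {n : ℕ} (hn : 2 ≤ n) (s : ℝ) (hs : s ∈ Set.Ioc (0:ℝ) 1) :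
    ∃ C : ℝ, 0 < C ∧
      ∀ (Ω : Set (Eu n)), IsDomainEu Ω → ∀ (x₀ : Eu n), x₀ ∈ Ω →
      ∀ (z : Eu n) (r b₀ : ℝ), 0 < r → b₀ ∈ Set.Ioc (0:ℝ) 1 →
      ∀ v : Eu n → ℝ,
        (∀ y : Eu n, v y = sInf {ℓv : ℝ | ∃ L : ℝ, 0 ≤ L ∧ ∃ γ : ℝ → Eu n,
          LipschitzOnWith 1 γ (Set.Icc 0 L) ∧ γ 0 = x₀ ∧ γ L = y ∧
          (∀ t ∈ Set.Icc (0:ℝ) L, γ t ∈ Ω) ∧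
          ℓv = (volume {t : ℝ | t ∈ Set.Icc (0:ℝ) L ∧ γ t ∈ ball z (b₀ * r)}).toReal}) →
      ∀ y ∈ Ω, ∀ w ∈ Ω, dist y w < infDist y Ωᶜ / 8 →
        |v y - v w| ≤ dist y w ^ s *
          (C * (b₀ * r) ^ (1 - s) * (Ω ∩ ball z (b₀ * r)).indicator (fun _ => (1:ℝ)) y +
           C * (b₀ * r) ^ (1 - s) * (Ω ∩ ball z (b₀ * r)).indicator (fun _ => (1:ℝ)) w) := by
  obtain ⟨hs0, hs1⟩ := hs
  refine ⟨4, by norm_num, ?_⟩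
  rintro Ω ⟨hΩopen, hΩne, hΩconn⟩ x₀ hx₀ z r b₀ hr hb₀ v hv y hy w hw hdw
  set ρ := b₀ * r with hρdef
  have hρ : 0 < ρ := mul_pos hb₀.1 hr
  have hv' : ∀ p, v p = sInf (curveSet Ω x₀ z ρ p) := hv
  have hne : ∀ p, p ∈ Ω → (curveSet Ω x₀ z ρ p).Nonempty := by
    intro p hp
    obtain ⟨L, hL, γ, h1, h2, h3, h4⟩ := exists_lip_path hΩopen hΩconn hx₀ hp
    exact ⟨_, L, hL, γ, h1, h2, h3, h4, rfl⟩
  -- nonnegativity of the right-hand side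
  have hindy : 0 ≤ (Ω ∩ ball z ρ).indicator (fun _ => (1:ℝ)) y :=
    Set.indicator_nonneg (fun _ _ => zero_le_one) _
  have hindw : 0 ≤ (Ω ∩ ball z ρ).indicator (fun _ => (1:ℝ)) w :=
    Set.indicator_nonneg (fun _ _ => zero_le_one) _
  have hρs : (0:ℝ) ≤ ρ ^ (1 - s) := Real.rpow_nonneg hρ.le _
  have hds : (0:ℝ) ≤ dist y w ^ s := Real.rpow_nonneg dist_nonneg _
  have hrhs0 : 0 ≤ dist y w ^ s *
      (4 * ρ ^ (1 - s) * (Ω ∩ ball z ρ).indicator (fun _ => (1:ℝ)) y +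
       4 * ρ ^ (1 - s) * (Ω ∩ ball z ρ).indicator (fun _ => (1:ℝ)) w) := by
    refine mul_nonneg hds (add_nonneg ?_ ?_) <;>
      [exact mul_nonneg (by positivity) hindy; exact mul_nonneg (by positivity) hindw]
  rcases eq_or_lt_of_le (dist_nonneg : (0:ℝ) ≤ dist y w) with h0 | hdpos
  · -- y = w
    have hyw : y = w := dist_eq_zero.1 h0.symm
    rw [hyw, sub_self, abs_zero]
    rw [hyw] at hrhs0
    exact hrhs0
  · -- 0 < dist y w
    set d := dist y w with hd
    have hI8 : 8 * d < infDist y Ωᶜ := by linarith [hdw]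
    have hIy : ∀ p : Eu n, dist y p ≤ 2 * d → p ∈ Ω := by
      intro p hp
      exact aux_mem_of_dist_lt_infDist (lt_of_le_of_lt hp (by linarith))
    have hyw : y ≠ w := dist_pos.1 hdpos
    by_cases hmem : y ∈ ball z ρ ∨ w ∈ ball z ρ
    · -- the near case
      obtain ⟨σ, hσl, hσ0, hσd, hσdist, hσiso⟩ := seg_lemma hyw
      have m1 : sInf (curveSet Ω x₀ z ρ w) ≤ sInf (curveSet Ω x₀ z ρ y) + min d (4*ρ) := by
        refine glue_lemma (hne y hy) dist_nonneg hσl hσ0 hσd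
          (fun t ht => hIy _ ((hσdist t ht).trans (by linarith [ht.2]))) ?_
        exact seg_measure_bound hρ hσiso dist_nonneg
      obtain ⟨σ', hσl', hσ0', hσd', hσdist', hσiso'⟩ := seg_lemma hyw.symm
      have m2 : sInf (curveSet Ω x₀ z ρ y) ≤ sInf (curveSet Ω x₀ z ρ w) + min d (4*ρ) := by
        refine glue_lemma (hne w hw) dist_nonneg hσl' hσ0' hσd' ?_ ?_
        · intro t ht
          refine hIy _ ?_
          calc dist y (σ' t) ≤ dist y w + dist w (σ' t) := dist_triangle _ _ _
            _ ≤ d + d := by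
                refine add_le_add le_rfl ((hσdist' t ht).trans ?_)
                calc t ≤ dist w y := ht.2
                  _ = d := dist_comm w y
            _ = 2 * d := by ring
        · have hb := seg_measure_bound (z := z) hρ hσiso' (dist_nonneg : (0:ℝ) ≤ dist w y)
          exact hb.trans (le_of_eq (by rw [dist_comm w y]))
      have habs : |v y - v w| ≤ min d (4*ρ) := by
        rw [hv' y, hv' w, abs_sub_le_iff]
        constructor <;> linarith
      have hmpos : 0 < min d (4*ρ) := lt_min hdpos (by positivity)
      have hmin : min d (4*ρ) ≤ d ^ s * (4 * ρ ^ (1-s)) := by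
        have h1 : min d (4*ρ) = min d (4*ρ) ^ s * min d (4*ρ) ^ (1-s) := by
          rw [← Real.rpow_add hmpos, show s + (1-s) = (1:ℝ) by ring, Real.rpow_one]
        rw [h1]
        have h2 : min d (4*ρ) ^ s ≤ d ^ s :=
          Real.rpow_le_rpow hmpos.le (min_le_left _ _) hs0.le
        have h3 : min d (4*ρ) ^ (1-s) ≤ (4*ρ) ^ (1-s) :=
          Real.rpow_le_rpow hmpos.le (min_le_right _ _) (by linarith)
        have h4 : ((4:ℝ)*ρ) ^ (1-s) = 4 ^ (1-s) * ρ ^ (1-s) :=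
          Real.mul_rpow (by norm_num) hρ.le
        have h5 : (4:ℝ) ^ (1-s) ≤ 4 := by
          calc (4:ℝ) ^ (1-s) ≤ 4 ^ (1:ℝ) :=
                Real.rpow_le_rpow_of_exponent_le (by norm_num) (by linarith)
            _ = 4 := Real.rpow_one 4
        calc min d (4*ρ) ^ s * min d (4*ρ) ^ (1-s) ≤ d ^ s * ((4*ρ) ^ (1-s)) :=
              mul_le_mul h2 h3 (Real.rpow_nonneg hmpos.le _) hds
          _ = d ^ s * (4 ^ (1-s) * ρ ^ (1-s)) := by rw [h4]
          _ ≤ d ^ s * (4 * ρ ^ (1-s)) := by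
              refine mul_le_mul_of_nonneg_left ?_ hds
              exact mul_le_mul_of_nonneg_right h5 hρs
      have hind : 1 ≤ (Ω ∩ ball z ρ).indicator (fun _ => (1:ℝ)) y +
          (Ω ∩ ball z ρ).indicator (fun _ => (1:ℝ)) w := by
        rcases hmem with h | h
        · have h1 : (Ω ∩ ball z ρ).indicator (fun _ => (1:ℝ)) y = 1 :=
            Set.indicator_of_mem (show y ∈ Ω ∩ ball z ρ from ⟨hy, h⟩) (fun _ => (1:ℝ))
          linarith
        · have h1 : (Ω ∩ ball z ρ).indicator (fun _ => (1:ℝ)) w = 1 :=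
            Set.indicator_of_mem (show w ∈ Ω ∩ ball z ρ from ⟨hw, h⟩) (fun _ => (1:ℝ))
          linarith
      have hrhs : d ^ s * (4 * ρ ^ (1-s)) ≤ d ^ s *
          (4 * ρ ^ (1-s) * (Ω ∩ ball z ρ).indicator (fun _ => (1:ℝ)) y +
           4 * ρ ^ (1-s) * (Ω ∩ ball z ρ).indicator (fun _ => (1:ℝ)) w) := by
        refine mul_le_mul_of_nonneg_left ?_ hds
        nlinarith [mul_le_mul_of_nonneg_left hind (by positivity : (0:ℝ) ≤ 4 * ρ ^ (1-s))]
      exact habs.trans (hmin.trans hrhs)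
    · -- both points are outside the ball
      push_neg at hmem
      obtain ⟨hyB, hwB⟩ := hmem
      have hyz : ρ ≤ dist y z := not_lt.1 (fun h => hyB (mem_ball.2 h))
      have hwz : ρ ≤ dist w z := not_lt.1 (fun h => hwB (mem_ball.2 h))
      obtain ⟨M, hM, δ, hδl, hδ0, hδM, hδp⟩ :
          ∃ M : ℝ, 0 ≤ M ∧ ∃ δ : ℝ → Eu n, LipschitzOnWith 1 δ (Set.Icc 0 M) ∧
            δ 0 = y ∧ δ M = w ∧ ∀ t ∈ Icc (0:ℝ) M, δ t ∈ Ω ∧ δ t ∉ ball z ρ := by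
        rcases le_or_gt ρ d with hcase | hcase
        · exact detour_bent hn hρ hdpos hcase hyz hwz hIy
        · exact detour_proj hρ hdpos hcase hyz hwz hIy
      have hzero : (volume {t : ℝ | t ∈ Icc (0:ℝ) M ∧ δ t ∈ ball z ρ}).toReal ≤ 0 := by
        have hemp : {t : ℝ | t ∈ Icc (0:ℝ) M ∧ δ t ∈ ball z ρ} = ∅ := by
          ext t
          simp only [mem_setOf_eq, mem_empty_iff_false, iff_false, not_and]
          exact fun ht => (hδp t ht).2
        rw [hemp]
        simp
      have m1 := glue_lemma (hne y hy) hM hδl hδ0 hδM (fun t ht => (hδp t ht).1) hzero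
      have hδl' : LipschitzOnWith 1 (fun t => δ (M - t)) (Icc 0 M) := by
        rw [lipschitzOnWith_iff_dist_le_mul] at hδl ⊢
        simp only [NNReal.coe_one, one_mul] at hδl ⊢
        intro t ht t' ht'
        have h1 := hδl (M - t) ⟨by linarith [ht.2], by linarith [ht.1]⟩ (M - t')
          ⟨by linarith [ht'.2], by linarith [ht'.1]⟩
        rw [Real.dist_eq, show M - t - (M - t') = -(t - t') by ring, abs_neg,
          ← Real.dist_eq] at h1
        exact h1
      have hzero' : (volume {t : ℝ | t ∈ Icc (0:ℝ) M ∧ (fun t => δ (M - t)) t ∈ ball z ρ}).toReal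
          ≤ 0 := by
        have hemp : {t : ℝ | t ∈ Icc (0:ℝ) M ∧ (fun t => δ (M - t)) t ∈ ball z ρ} = ∅ := by
          ext t
          simp only [mem_setOf_eq, mem_empty_iff_false, iff_false, not_and]
          intro ht
          exact (hδp (M - t) ⟨by linarith [ht.2], by linarith [ht.1]⟩).2
        rw [hemp]
        simp
      have m2 := glue_lemma (hne w hw) hM hδl'
        (show δ (M - 0) = w by rw [sub_zero, hδM])
        (show δ (M - M) = y by rw [sub_self, hδ0])
        (fun t ht => (hδp (M - t) ⟨by linarith [ht.2], by linarith [ht.1]⟩).1) hzero'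
      have hveq : v y = v w := by
        rw [hv' y, hv' w]
        linarith
      rw [hveq, sub_self, abs_zero]
      exact hrhs0
end
end

section
/- Let n ≥ 2, s ∈ (0,1], and let B = B(x₀, r) be a ball in ℝⁿ. Let u be locally integrable on 4B and let g be a nonnegative measurable function on 4B such that |u(x) − u(y)| ≤ |x − y|^s (g(x) + g(y)) for all x, y ∈ 4B outside a set of Lebesgue measure zero; extend g by zero to all of ℝⁿ. Then there exists a constant C > 0 depending only on n and s such that for almost every x ∈ B: |u(x) − u_B| ≤ C ∫_{4B} (ℳg)(y) |y − x|^{s−n} dy, where u_B := (1/|B|) ∫_B u and ℳg is the Hardy–Littlewood maximal function of g. -/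
open MeasureTheory Metric Set
open scoped ENNReal

noncomputable section

namespace Stmt17Aux

lemma nontrivEu {n : ℕ} (hn : 1 ≤ n) : Nontrivial (Eu n) :=
  Module.nontrivial_of_finrank_pos (R := ℝ) (by rw [finrank_euclideanSpace_fin]; omega)

lemma volume_ball_eu {n : ℕ} (hn : 1 ≤ n) (x : Eu n) {t : ℝ} (ht : 0 ≤ t) :
    volume (ball x t) = ENNReal.ofReal (t ^ n) * volume (ball (0 : Eu n) 1) := by
  haveI := nontrivEu hn
  rw [Measure.addHaar_ball volume x ht, finrank_euclideanSpace_fin]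

lemma ball_ae_closedBall {n : ℕ} (hn : 1 ≤ n) (x : Eu n) (t : ℝ) :
    ball x t =ᵐ[volume] closedBall x t := by
  haveI := nontrivEu hn
  have h : (sphere x t : Set (Eu n)) =ᵐ[volume] (∅ : Set (Eu n)) :=
    MeasureTheory.ae_eq_empty.2 (Measure.addHaar_sphere volume x t)
  have h2 := (Filter.EventuallyEq.refl (ae volume) (ball x t)).union h
  rw [ball_union_sphere, union_empty] at h2
  exact h2.symm

lemma abs_setAverage_le {α : Type*} [MeasurableSpace α] (μ : Measure α) (S : Set α) (f : α → ℝ) :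
    |⨍ z in S, f z ∂μ| ≤ ⨍ z in S, |f z| ∂μ := by
  rw [setAverage_eq, setAverage_eq, smul_eq_mul, smul_eq_mul, abs_mul, measureReal_def,
    abs_of_nonneg (inv_nonneg.2 ENNReal.toReal_nonneg)]
  have := norm_integral_le_integral_norm (μ := μ.restrict S) f
  simp only [Real.norm_eq_abs] at this
  exact mul_le_mul_of_nonneg_left this (by positivity)


lemma chain_step {n : ℕ} {s : ℝ} (hs0 : 0 < s) {x₀ : Eu n} {r : ℝ}
    {u g : Eu n → ℝ} (hg0 : ∀ z, 0 ≤ g z)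
    {N : Set (Eu n)} (hN : volume N = 0)
    (hHaj : ∀ z ∈ ball x₀ (4*r) \ N, ∀ w ∈ ball x₀ (4*r) \ N,
      |u z - u w| ≤ dist z w ^ s * (g z + g w))
    {x : Eu n} {t : ℝ} (ht : 0 < t)
    (hsub : ball x (2*t) ⊆ ball x₀ (4*r))
    {B'' : Set (Eu n)} (hB''sub : B'' ⊆ ball x (2*t))
    (hvol : (volume (ball x (2*t))).toReal ≤ 2^n * (volume B'').toReal)
    (hvol0 : volume B'' ≠ 0)
    (hu : IntegrableOn u (ball x (2*t)) volume)
    (hgi : IntegrableOn g (ball x (2*t)) volume) :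
    |(⨍ z in B'', u z) - ⨍ z in ball x (2*t), u z| ≤
      2^(n+1) * (4*t)^s * ⨍ z in ball x (2*t), g z := by
  set B' := ball x (2*t) with hB'
  set c := ⨍ z in B', u z with hc
  set G := ⨍ z in B', g z with hG
  have hB'm : MeasurableSet B' := measurableSet_ball
  have hV'pos : 0 < (volume B').toReal :=
    ENNReal.toReal_pos (measure_ball_pos _ _ (by positivity)).ne' measure_ball_lt_top.ne
  have hV''lt : volume B'' < ⊤ := lt_of_le_of_lt (measure_mono hB''sub) measure_ball_lt_top
  have hV''pos : 0 < (volume B'').toReal := ENNReal.toReal_pos hvol0 hV''lt.ne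
  have hconst : ∀ (a : ℝ), IntegrableOn (fun _ => a) B' volume :=
    fun a => integrableOn_const measure_ball_lt_top.ne
  have hconst'' : ∀ (a : ℝ), IntegrableOn (fun _ => a) B'' volume :=
    fun a => integrableOn_const hV''lt.ne
  have hintG : (volume B').toReal * G = ∫ z in B', g z := by
    rw [hG, setAverage_eq, smul_eq_mul, measureReal_def, ← mul_assoc, mul_inv_cancel₀ hV'pos.ne', one_mul]
  have hG0 : 0 ≤ G := by
    rw [hG, setAverage_eq]
    exact smul_nonneg (by positivity) (setIntegral_nonneg hB'm fun z _ => hg0 z)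
  have key : ∀ᵐ z ∂(volume.restrict B'), |u z - c| ≤ (4*t)^s * (g z + G) := by
    filter_upwards [ae_restrict_mem hB'm,
      ae_restrict_of_ae (measure_eq_zero_iff_ae_notMem.1 hN)] with z hz hzN
    have hz4 : z ∈ ball x₀ (4*r) \ N := ⟨hsub hz, hzN⟩
    have havg : u z - c = ⨍ w in B', (u z - u w) := by
      rw [hc, setAverage_eq, setAverage_eq, smul_eq_mul, smul_eq_mul,
        integral_sub (hconst (u z)) hu, setIntegral_const, smul_eq_mul, measureReal_def]
      field_simp
    have h1 : |u z - c| ≤ ⨍ w in B', |u z - u w| := by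
      rw [havg]; exact abs_setAverage_le _ _ _
    have h2 : (⨍ w in B', |u z - u w|) ≤ ⨍ w in B', (4*t)^s * (g z + g w) := by
      rw [setAverage_eq, setAverage_eq, smul_eq_mul, smul_eq_mul]
      refine mul_le_mul_of_nonneg_left ?_ (by positivity)
      refine integral_mono_of_nonneg (Filter.Eventually.of_forall fun w => abs_nonneg _)
        (((hconst (g z)).add hgi).const_mul _) ?_
      filter_upwards [ae_restrict_mem hB'm,
        ae_restrict_of_ae (measure_eq_zero_iff_ae_notMem.1 hN)] with w hw hwN
      have hw4 : w ∈ ball x₀ (4*r) \ N := ⟨hsub hw, hwN⟩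
      refine (hHaj z hz4 w hw4).trans ?_
      have hd : dist z w ^ s ≤ (4*t) ^ s := by
        refine Real.rpow_le_rpow dist_nonneg ?_ hs0.le
        have hz' := mem_ball.1 hz
        have hw' := mem_ball.1 hw
        calc dist z w ≤ dist z x + dist x w := dist_triangle _ _ _
          _ ≤ 2*t + 2*t := by
              rw [dist_comm x w]; exact add_le_add hz'.le hw'.le
          _ = 4*t := by ring
      exact mul_le_mul_of_nonneg_right hd (by
        have := hg0 z; have := hg0 w; linarith)
    have h3 : (⨍ w in B', (4*t)^s * (g z + g w)) = (4*t)^s * (g z + G) := by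
      rw [setAverage_eq, smul_eq_mul, integral_const_mul,
        integral_add (hconst (g z)) hgi, setIntegral_const, smul_eq_mul, ← hintG, hG,
        setAverage_eq, smul_eq_mul, measureReal_def]
      field_simp
    exact h1.trans (h2.trans_eq h3)
  have habs : IntegrableOn (fun z => |u z - c|) B' volume := (hu.sub (hconst c)).abs
  have step2 : ∫ z in B', |u z - c| ≤ (4*t)^s * (2 * ((volume B').toReal * G)) := by
    have hle : ∫ z in B', |u z - c| ≤ ∫ z in B', (4*t)^s * (g z + G) :=
      integral_mono_of_nonneg (Filter.Eventually.of_forall fun z => abs_nonneg _)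
        ((hgi.add (hconst G)).const_mul _) key
    refine hle.trans_eq ?_
    rw [integral_const_mul, integral_add hgi (hconst G), setIntegral_const, smul_eq_mul, ← hintG, measureReal_def]
    ring
  have havg2 : (⨍ z in B'', u z) - c = ⨍ z in B'', (u z - c) := by
    rw [setAverage_eq, setAverage_eq, smul_eq_mul, smul_eq_mul,
      integral_sub (hu.mono_set hB''sub) (hconst'' c), setIntegral_const, smul_eq_mul, measureReal_def]
    field_simp
  have step1 : |(⨍ z in B'', u z) - c| ≤ (volume B'').toReal⁻¹ * ∫ z in B', |u z - c| := by
    rw [havg2]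
    refine (abs_setAverage_le _ _ _).trans ?_
    rw [setAverage_eq, smul_eq_mul]
    refine mul_le_mul_of_nonneg_left ?_ (by positivity)
    exact setIntegral_mono_set habs (Filter.Eventually.of_forall fun z => abs_nonneg _)
      (HasSubset.Subset.eventuallyLE hB''sub)
  have hinv : (volume B'').toReal⁻¹ ≤ 2^n * (volume B').toReal⁻¹ := by
    rw [inv_le_iff_one_le_mul₀ hV''pos]
    calc (1:ℝ) = (volume B').toReal * (volume B').toReal⁻¹ := by
          rw [mul_inv_cancel₀ hV'pos.ne']
      _ ≤ (2^n * (volume B'').toReal) * (volume B').toReal⁻¹ := by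
          exact mul_le_mul_of_nonneg_right hvol (by positivity)
      _ = 2^n * (volume B').toReal⁻¹ * (volume B'').toReal := by ring
  have hI0 : 0 ≤ ∫ z in B', |u z - c| := integral_nonneg fun z => abs_nonneg _
  calc |(⨍ z in B'', u z) - c| ≤ (volume B'').toReal⁻¹ * ∫ z in B', |u z - c| := step1
    _ ≤ (2^n * (volume B').toReal⁻¹) * ∫ z in B', |u z - c| :=
        mul_le_mul_of_nonneg_right hinv hI0
    _ ≤ (2^n * (volume B').toReal⁻¹) * ((4*t)^s * (2 * ((volume B').toReal * G))) :=
        mul_le_mul_of_nonneg_left step2 (by positivity)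
    _ = 2^(n+1) * (4*t)^s * G := by
        field_simp
        ring


lemma hlmax_lower {n : ℕ} (hn : 1 ≤ n) {g : Eu n → ℝ} (hg0 : ∀ z, 0 ≤ g z)
    {x : Eu n} {T : ℝ} (hT : 0 < T) (hgi : IntegrableOn g (ball x T) volume)
    {y : Eu n} (hy : y ∈ ball x T) :
    ENNReal.ofReal (⨍ z in ball x T, g z) ≤ (2:ℝ≥0∞)^n * HLMax g y := by
  have hsub2 : ball x T ⊆ ball y (2*T) := fun z hz => by
    rw [mem_ball] at *
    calc dist z y ≤ dist z x + dist x y := dist_triangle _ _ _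
      _ < T + T := add_lt_add hz (by rw [dist_comm]; exact hy)
      _ = 2*T := by ring
  have hVpos : 0 < (volume (ball x T)).toReal :=
    ENNReal.toReal_pos (measure_ball_pos _ _ hT).ne' measure_ball_lt_top.ne
  have hl : (volume (ball y (2*T)))⁻¹ * ∫⁻ z in ball y (2*T), ENNReal.ofReal |g z| ≤
      HLMax g y := by
    exact le_iSup₂ (f := fun (t : ℝ) (_ : 0 < t) =>
      (volume (ball y t))⁻¹ * ∫⁻ z in ball y t, ENNReal.ofReal |g z|) (2*T) (by positivity)
  have hball_eq : volume (ball y (2*T)) = (2:ℝ≥0∞)^n * volume (ball x T) := by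
    rw [volume_ball_eu hn y (by positivity), volume_ball_eu hn x hT.le, mul_pow,
      ENNReal.ofReal_mul (by positivity), ← mul_assoc]
    congr 1
    congr 1
    rw [ENNReal.ofReal_pow (by norm_num)]
    norm_num
  have h2n0 : ((2:ℝ≥0∞)^n) ≠ 0 := by positivity
  have h2nt : ((2:ℝ≥0∞)^n) ≠ ⊤ := by
    exact ENNReal.pow_ne_top (by norm_num)
  have havg : ENNReal.ofReal (⨍ z in ball x T, g z) =
      (volume (ball x T))⁻¹ * ∫⁻ z in ball x T, ENNReal.ofReal |g z| := by
    rw [setAverage_eq, smul_eq_mul, ENNReal.ofReal_mul (by positivity),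
      ofReal_integral_eq_lintegral_ofReal hgi (Filter.Eventually.of_forall fun z => hg0 z)]
    congr 1
    · rw [measureReal_def, ENNReal.ofReal_inv_of_pos hVpos, ENNReal.ofReal_toReal measure_ball_lt_top.ne]
    · exact lintegral_congr fun z => by rw [abs_of_nonneg (hg0 z)]
  have hinv : (volume (ball x T))⁻¹ = (2:ℝ≥0∞)^n * (volume (ball y (2*T)))⁻¹ := by
    rw [hball_eq, ENNReal.mul_inv (Or.inl h2n0) (Or.inl h2nt), ← mul_assoc,
      ENNReal.mul_inv_cancel h2n0 h2nt, one_mul]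
  rw [havg, hinv, mul_assoc]
  refine mul_le_mul_right (le_trans ?_ hl) _
  exact mul_le_mul_right (lintegral_mono_set hsub2) _

lemma annulus_lower {n : ℕ} (hn : 2 ≤ n) {s : ℝ} (hs0 : 0 < s) (hs1 : s ≤ 1)
    {g : Eu n → ℝ} (hg0 : ∀ z, 0 ≤ g z)
    {x : Eu n} {t : ℝ} (ht : 0 < t) (hgi : IntegrableOn g (ball x (2*t)) volume) :
    ENNReal.ofReal ((2:ℝ)^(s-(n:ℝ)) * (2^n - 1) * (volume (ball (0:Eu n) 1)).toReal *
        (t^s * ⨍ z in ball x (2*t), g z)) ≤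
      (2:ℝ≥0∞)^n * ∫⁻ y in ball x (2*t) \ ball x t,
        HLMax g y * ENNReal.ofReal (dist y x ^ (s-(n:ℝ))) := by
  have hn1 : 1 ≤ n := by omega
  set ω' := (volume (ball (0:Eu n) 1)).toReal with hω'
  have hω : volume (ball (0:Eu n) 1) = ENNReal.ofReal ω' :=
    (ENNReal.ofReal_toReal measure_ball_lt_top.ne).symm
  have hω'0 : 0 ≤ ω' := ENNReal.toReal_nonneg
  set G := ⨍ z in ball x (2*t), g z with hG
  have hG0 : 0 ≤ G := by
    rw [hG, setAverage_eq]
    exact smul_nonneg (by positivity) (setIntegral_nonneg measurableSet_ball fun z _ => hg0 z)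
  set A := ball x (2*t) \ ball x t with hA
  have hAm : MeasurableSet A := measurableSet_ball.diff measurableSet_ball
  have hsn : s - (n:ℝ) ≤ 0 := by
    have : (1:ℝ) ≤ (n:ℝ) := by exact_mod_cast hn1
    linarith
  have h2t : (0:ℝ) < 2*t := by positivity
  have hp0 : (0:ℝ) ≤ (2*t) ^ (s-(n:ℝ)) := Real.rpow_nonneg h2t.le _
  have h2ntop : ((2:ℝ≥0∞)^n) ≠ ⊤ := ENNReal.pow_ne_top (by norm_num)
  have hpt : ∀ y ∈ A, ENNReal.ofReal G * ENNReal.ofReal ((2*t) ^ (s-(n:ℝ))) ≤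
      (2:ℝ≥0∞)^n * (HLMax g y * ENNReal.ofReal (dist y x ^ (s-(n:ℝ)))) := by
    intro y hy
    have hy1 : y ∈ ball x (2*t) := hy.1
    have hyd : t ≤ dist y x := not_lt.1 (fun h => hy.2 (mem_ball.2 h))
    have h1 : ENNReal.ofReal G ≤ (2:ℝ≥0∞)^n * HLMax g y :=
      hlmax_lower hn1 hg0 (by positivity) hgi hy1
    have h2 : ENNReal.ofReal ((2*t) ^ (s-(n:ℝ))) ≤ ENNReal.ofReal (dist y x ^ (s-(n:ℝ))) := by
      refine ENNReal.ofReal_le_ofReal ?_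
      exact Real.rpow_le_rpow_of_nonpos (lt_of_lt_of_le ht hyd) (mem_ball.1 hy1).le hsn
    calc ENNReal.ofReal G * ENNReal.ofReal ((2*t) ^ (s-(n:ℝ))) ≤
        ((2:ℝ≥0∞)^n * HLMax g y) * ENNReal.ofReal (dist y x ^ (s-(n:ℝ))) :=
          mul_le_mul' h1 h2
      _ = (2:ℝ≥0∞)^n * (HLMax g y * ENNReal.ofReal (dist y x ^ (s-(n:ℝ)))) := mul_assoc _ _ _
  have hconstint : ENNReal.ofReal G * ENNReal.ofReal ((2*t) ^ (s-(n:ℝ))) * volume A ≤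
      (2:ℝ≥0∞)^n * ∫⁻ y in A, HLMax g y * ENNReal.ofReal (dist y x ^ (s-(n:ℝ))) := by
    calc ENNReal.ofReal G * ENNReal.ofReal ((2*t) ^ (s-(n:ℝ))) * volume A
        = ∫⁻ _ in A, (ENNReal.ofReal G * ENNReal.ofReal ((2*t) ^ (s-(n:ℝ)))) :=
          (setLIntegral_const A _).symm
      _ ≤ ∫⁻ y in A, (2:ℝ≥0∞)^n * (HLMax g y * ENNReal.ofReal (dist y x ^ (s-(n:ℝ)))) := by
          refine lintegral_mono_ae ?_
          filter_upwards [ae_restrict_mem hAm] with y hy using hpt y hy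
      _ = (2:ℝ≥0∞)^n * ∫⁻ y in A, HLMax g y * ENNReal.ofReal (dist y x ^ (s-(n:ℝ))) :=
          lintegral_const_mul' _ _ h2ntop
  have htn : (t:ℝ)^n ≤ (2*t)^n := pow_le_pow_left₀ ht.le (by linarith) n
  have hvolA : volume A = ENNReal.ofReal (((2*t)^n - t^n) * ω') := by
    rw [hA, measure_diff (ball_subset_ball (by linarith)) measurableSet_ball.nullMeasurableSet
      measure_ball_lt_top.ne, volume_ball_eu hn1 x h2t.le, volume_ball_eu hn1 x ht.le, hω,
      ← ENNReal.ofReal_mul (by positivity), ← ENNReal.ofReal_mul (by positivity),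
      ← ENNReal.ofReal_sub _ (by positivity), ← sub_mul]
  -- rpow identities
  have e1 : (2*t:ℝ)^(s-(n:ℝ)) * (2*t)^(n:ℕ) = (2*t)^s := by
    rw [← Real.rpow_natCast (2*t) n, ← Real.rpow_add h2t]
    norm_num
  have e2 : (2*t:ℝ)^(s-(n:ℝ)) * t^(n:ℕ) = 2^(s-(n:ℝ)) * t^s := by
    rw [Real.mul_rpow (by norm_num) ht.le, ← Real.rpow_natCast t n, mul_assoc,
      ← Real.rpow_add ht]
    norm_num
  have e3 : (2*t:ℝ)^s = 2^s * t^s := Real.mul_rpow (by norm_num) ht.le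
  have e4 : (2:ℝ)^s = 2^(s-(n:ℝ)) * 2^(n:ℕ) := by
    rw [← Real.rpow_natCast (2:ℝ) n, ← Real.rpow_add two_pos]
    norm_num
  have hident : (2*t:ℝ)^(s-(n:ℝ)) * ((2*t)^(n:ℕ) - t^(n:ℕ)) =
      2^(s-(n:ℝ)) * ((2:ℝ)^(n:ℕ) - 1) * t^s := by
    rw [mul_sub, e1, e2, e3, e4]
    ring
  calc ENNReal.ofReal ((2:ℝ)^(s-(n:ℝ)) * (2^n - 1) * ω' * (t^s * G))
      = ENNReal.ofReal G * ENNReal.ofReal ((2*t) ^ (s-(n:ℝ))) * volume A := by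
        rw [hvolA, ← ENNReal.ofReal_mul hG0, ← ENNReal.ofReal_mul (mul_nonneg hG0 hp0)]
        congr 1
        linear_combination (-(G * ω')) * hident
    _ ≤ _ := hconstint


def Kc (n : ℕ) (s : ℝ) : ℝ :=
  2^(n+1) * 4^s * 2^n / (2^(s-(n:ℝ)) * ((2:ℝ)^n - 1) * (volume (ball (0:Eu n) 1)).toReal)

lemma omega_pos {n : ℕ} (hn : 1 ≤ n) : 0 < (volume (ball (0:Eu n) 1)).toReal := by
  haveI := nontrivEu hn
  exact ENNReal.toReal_pos (measure_ball_pos _ _ one_pos).ne' measure_ball_lt_top.ne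

lemma c0_pos {n : ℕ} (hn : 1 ≤ n) (s : ℝ) :
    0 < 2^(s-(n:ℝ)) * ((2:ℝ)^n - 1) * (volume (ball (0:Eu n) 1)).toReal := by
  have h1 : (0:ℝ) < 2^(s-(n:ℝ)) := Real.rpow_pos_of_pos two_pos _
  have h2 : (1:ℝ) < (2:ℝ)^n := one_lt_pow₀ (by norm_num) (by omega)
  have h3 := omega_pos hn
  exact mul_pos (mul_pos h1 (by linarith)) h3

lemma Kc_pos {n : ℕ} (hn : 1 ≤ n) (s : ℝ) : 0 < Kc n s := by
  have h4 : (0:ℝ) < 4^s := Real.rpow_pos_of_pos (by norm_num) _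
  exact div_pos (by positivity) (c0_pos hn s)

lemma potential_step {n : ℕ} (hn : 2 ≤ n) {s : ℝ} (hs0 : 0 < s) (hs1 : s ≤ 1)
    {x₀ : Eu n} {r : ℝ}
    {u g : Eu n → ℝ} (hg0 : ∀ z, 0 ≤ g z)
    {N : Set (Eu n)} (hN : volume N = 0)
    (hHaj : ∀ z ∈ ball x₀ (4*r) \ N, ∀ w ∈ ball x₀ (4*r) \ N,
      |u z - u w| ≤ dist z w ^ s * (g z + g w))
    {x : Eu n} {t : ℝ} (ht : 0 < t)
    (hsub : ball x (2*t) ⊆ ball x₀ (4*r))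
    {B'' : Set (Eu n)} (hB''sub : B'' ⊆ ball x (2*t))
    (hvol : (volume (ball x (2*t))).toReal ≤ 2^n * (volume B'').toReal)
    (hvol0 : volume B'' ≠ 0)
    (hu : IntegrableOn u (ball x (2*t)) volume)
    (hgi : IntegrableOn g (ball x (2*t)) volume) :
    ENNReal.ofReal |(⨍ z in B'', u z) - ⨍ z in ball x (2*t), u z| ≤
      ENNReal.ofReal (Kc n s) *
        ∫⁻ y in ball x (2*t) \ ball x t,
          HLMax g y * ENNReal.ofReal (dist y x ^ (s-(n:ℝ))) := by
  have hn1 : 1 ≤ n := by omega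
  set ω' := (volume (ball (0:Eu n) 1)).toReal with hω'
  set c₀ := 2^(s-(n:ℝ)) * ((2:ℝ)^n - 1) * ω' with hc₀
  have hc₀pos : 0 < c₀ := c0_pos hn1 s
  set G := ⨍ z in ball x (2*t), g z with hG
  have hG0 : 0 ≤ G := by
    rw [hG, setAverage_eq]
    exact smul_nonneg (by positivity) (setIntegral_nonneg measurableSet_ball fun z _ => hg0 z)
  have h4 : (0:ℝ) < 4^s := Real.rpow_pos_of_pos (by norm_num) _
  have hKnum : (0:ℝ) ≤ 2^(n+1) * 4^s / c₀ := div_nonneg (by positivity) hc₀pos.le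
  have hchain := chain_step hs0 hg0 hN hHaj ht hsub hB''sub hvol hvol0 hu hgi
  have hann := annulus_lower hn hs0 hs1 hg0 ht hgi
  set I := ∫⁻ y in ball x (2*t) \ ball x t,
      HLMax g y * ENNReal.ofReal (dist y x ^ (s-(n:ℝ))) with hI
  calc ENNReal.ofReal |(⨍ z in B'', u z) - ⨍ z in ball x (2*t), u z|
      ≤ ENNReal.ofReal (2^(n+1) * (4*t)^s * G) := ENNReal.ofReal_le_ofReal hchain
    _ = ENNReal.ofReal ((2^(n+1) * 4^s / c₀) * (c₀ * (t^s * G))) := by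
        congr 1
        rw [Real.mul_rpow (by norm_num) ht.le]
        field_simp
    _ = ENNReal.ofReal (2^(n+1) * 4^s / c₀) * ENNReal.ofReal (c₀ * (t^s * G)) :=
        ENNReal.ofReal_mul hKnum
    _ ≤ ENNReal.ofReal (2^(n+1) * 4^s / c₀) * ((2:ℝ≥0∞)^n * I) := by
        refine mul_le_mul_right ?_ _
        refine le_trans (le_of_eq ?_) hann
        rw [hc₀]
    _ = ENNReal.ofReal (Kc n s) * I := by
        rw [← mul_assoc]
        congr 1
        rw [show ((2:ℝ≥0∞)^n) = ENNReal.ofReal ((2:ℝ)^n) by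
            rw [ENNReal.ofReal_pow (by norm_num)]; norm_num,
          ← ENNReal.ofReal_mul hKnum]
        congr 1
        rw [Kc, hc₀]
        field_simp
        rw [hω']


lemma vol_ball_toReal {n : ℕ} (hn : 1 ≤ n) (x : Eu n) {t : ℝ} (ht : 0 ≤ t) :
    (volume (ball x t)).toReal = t^n * (volume (ball (0:Eu n) 1)).toReal := by
  rw [volume_ball_eu hn x ht, ENNReal.toReal_mul, ENNReal.toReal_ofReal (by positivity)]

end Stmt17Aux

open Stmt17Aux

/-- Pointwise potential estimate: if `g` is a Hajłasz gradient of `u` on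
`4B` (extended by zero), then for a.e. `x ∈ B`,
`|u x - u_B| ≤ C ∫_{4B} (ℳ g)(y) |y - x|^{s-n} dy`, with `C = C(n, s)`. -/
theorem stmt17 {n : ℕ} (hn : 2 ≤ n) (s : ℝ) (hs : s ∈ Set.Ioc (0:ℝ) 1) :
    ∃ C : ℝ, 0 < C ∧ ∀ (x₀ : Eu n) (r : ℝ), 0 < r →
      ∀ u g : Eu n → ℝ, LocallyIntegrableOn u (ball x₀ (4 * r)) volume →
        Measurable g → (∀ x, 0 ≤ g x) → (∀ x ∉ ball x₀ (4 * r), g x = 0) →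
        (∃ N : Set (Eu n), volume N = 0 ∧
          ∀ x ∈ ball x₀ (4 * r) \ N, ∀ y ∈ ball x₀ (4 * r) \ N,
            |u x - u y| ≤ dist x y ^ s * (g x + g y)) →
        ∀ᵐ x ∂(volume.restrict (ball x₀ r)),
          ENNReal.ofReal |u x - ⨍ y in ball x₀ r, u y|
            ≤ ENNReal.ofReal C *
              ∫⁻ y in ball x₀ (4 * r),
                HLMax g y * ENNReal.ofReal (dist y x ^ (s - (n : ℝ))) := by
  obtain ⟨hs0, hs1⟩ := hs
  have hn1 : 1 ≤ n := by omega
  have hKpos := Kc_pos (n := n) hn1 s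
  refine ⟨2 * Kc n s, by linarith, ?_⟩
  intro x₀ r hr u g hu hgm hg0 hgsupp hHajE
  obtain ⟨N, hN, hHaj⟩ := hHajE
  by_cases hgint : IntegrableOn g (ball x₀ (4*r)) volume
  · -- main case
    -- the indicator extension of u
    have hu'int : Integrable ((closedBall x₀ (3*r)).indicator u) volume := by
      rw [integrable_indicator_iff measurableSet_closedBall]
      exact hu.integrableOn_compact_subset (closedBall_subset_ball (by linarith))
        (isCompact_closedBall _ _)
    have hLeb := IsUnifLocDoublingMeasure.ae_tendsto_average (μ := volume)
      hu'int.locallyIntegrable 1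
    rw [ae_restrict_iff' measurableSet_ball]
    filter_upwards [hLeb] with x hx hxB
    -- radii
    have htpos : ∀ m : ℕ, (0:ℝ) < r/2^m := fun m => by positivity
    have hhalf : ∀ m : ℕ, r/2^m = 2*(r/2^(m+1)) := fun m => by rw [pow_succ]; ring
    have hrad : ∀ m : ℕ, 2*(r/2^m) ≤ 2*r := fun m => by
      have h1 : (1:ℝ) ≤ 2^m := one_le_pow₀ (by norm_num)
      have : r/2^m ≤ r := div_le_self hr.le h1
      linarith
    have hballs : ∀ m : ℕ, ball x (2*(r/2^m)) ⊆ closedBall x₀ (3*r) := fun m z hz => by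
      rw [mem_closedBall]
      calc dist z x₀ ≤ dist z x + dist x x₀ := dist_triangle _ _ _
        _ ≤ 2*r + r := add_le_add ((mem_ball.1 hz).le.trans (hrad m)) (mem_ball.1 hxB).le
        _ = 3*r := by ring
    have hsubm : ∀ m : ℕ, ball x (2*(r/2^m)) ⊆ ball x₀ (4*r) := fun m z hz => by
      have := mem_closedBall.1 (hballs m hz)
      exact mem_ball.2 (by linarith)
    -- averages over balls of u
    set f : ℕ → ℝ := fun m => ⨍ y in ball x (2*(r/2^m)), u y with hfdef
    have havg_eq : ∀ m : ℕ,
        (⨍ y in closedBall x (2*(r/2^m)), (closedBall x₀ (3*r)).indicator u y) = f m := by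
      intro m
      have h1 : volume.restrict (closedBall x (2*(r/2^m))) =
          volume.restrict (ball x (2*(r/2^m))) :=
        (Measure.restrict_congr_set (ball_ae_closedBall hn1 x _)).symm
      show average (volume.restrict (closedBall x (2*(r/2^m)))) _ = _
      rw [h1]
      refine average_congr ?_
      exact Filter.eventually_of_mem (self_mem_ae_restrict measurableSet_ball)
        (fun z hz => indicator_of_mem (hballs m hz) u)
    have hux : (closedBall x₀ (3*r)).indicator u x = u x :=
      indicator_of_mem (by rw [mem_closedBall]; linarith [(mem_ball.1 hxB).le]) u
    have hfx : Filter.Tendsto f Filter.atTop (nhds (u x)) := by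
      have hδpos : ∀ m : ℕ, (0:ℝ) < 2*(r/2^m) := fun m => by positivity
      have hδ0 : Filter.Tendsto (fun m : ℕ => 2*(r/2^m)) Filter.atTop (nhds 0) := by
        have h12 := tendsto_pow_atTop_nhds_zero_of_lt_one (by norm_num : (0:ℝ) ≤ 1/2)
          (by norm_num : (1/2:ℝ) < 1)
        have := h12.const_mul (2*r)
        simp only [mul_zero] at this
        refine this.congr fun m => ?_
        rw [div_pow, one_pow]
        ring
      have hδ : Filter.Tendsto (fun m : ℕ => 2*(r/2^m)) Filter.atTop (nhdsWithin 0 (Set.Ioi 0)) :=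
        tendsto_nhdsWithin_of_tendsto_nhds_of_eventually_within _ hδ0
          (Filter.Eventually.of_forall fun m => hδpos m)
      have h1 := hx (fun _ => x) (fun m => 2*(r/2^m)) hδ
        (Filter.Eventually.of_forall fun m => by
          rw [one_mul]; exact mem_closedBall_self (hδpos m).le)
      rw [hux] at h1
      exact h1.congr havg_eq
    -- integrability
    have hum : ∀ m : ℕ, IntegrableOn u (ball x (2*(r/2^m))) volume := fun m =>
      (hu'int.integrableOn.mono_set (hballs m)).congr_fun
        (fun z hz => indicator_of_mem (hballs m hz) u) measurableSet_ball
    have hgim : ∀ m : ℕ, IntegrableOn g (ball x (2*(r/2^m))) volume := fun m =>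
      hgint.mono_set (hsubm m)
    -- volumes
    have hvolm : ∀ m : ℕ, (volume (ball x (2*(r/2^m)))).toReal ≤
        2^n * (volume (ball x (r/2^m))).toReal := fun m => by
      rw [vol_ball_toReal hn1 x (by positivity), vol_ball_toReal hn1 x (htpos m).le, mul_pow]
      rw [mul_assoc]
    -- chain steps
    have hfsucc : ∀ m : ℕ, f (m+1) = ⨍ y in ball x (r/2^m), u y := fun m => by
      rw [hfdef]
      simp only
      rw [hhalf m]
    have hd : ∀ m : ℕ, ENNReal.ofReal |f (m+1) - f m| ≤ ENNReal.ofReal (Kc n s) *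
        ∫⁻ y in ball x (2*(r/2^m)) \ ball x (r/2^m),
          HLMax g y * ENNReal.ofReal (dist y x ^ (s - (n:ℝ))) := fun m => by
      rw [hfsucc m]
      exact potential_step hn hs0 hs1 hg0 hN hHaj (htpos m) (hsubm m)
        (ball_subset_ball (by linarith [htpos m])) (hvolm m)
        (measure_ball_pos _ _ (htpos m)).ne' (hum m) (hgim m)
    -- disjointness of annuli
    have hdisjlt : ∀ i k : ℕ, i < k →
        Disjoint (ball x (2*(r/2^i)) \ ball x (r/2^i)) (ball x (2*(r/2^k)) \ ball x (r/2^k)) := by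
      intro i k hik
      refine Set.disjoint_left.2 fun z hzi hzk => hzi.2 ?_
      refine ball_subset_ball ?_ hzk.1
      have h2 : (2:ℝ)^(i+1) ≤ 2^k := pow_le_pow_right₀ one_le_two hik
      rw [mul_div_assoc', div_le_div_iff₀ (by positivity) (by positivity)]
      calc 2*r*2^i = r*(2^i*2) := by ring
        _ = r*2^(i+1) := by rw [pow_succ]
        _ ≤ r*2^k := mul_le_mul_of_nonneg_left h2 hr.le
    have hdisj : Pairwise (Function.onFun Disjoint
        (fun m : ℕ => ball x (2*(r/2^m)) \ ball x (r/2^m))) := by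
      intro i k hik
      rcases lt_or_gt_of_ne hik with h | h
      · exact hdisjlt i k h
      · exact (hdisjlt k i h).symm
    have hsum : (∑' m : ℕ, ∫⁻ y in ball x (2*(r/2^m)) \ ball x (r/2^m),
          HLMax g y * ENNReal.ofReal (dist y x ^ (s - (n:ℝ)))) ≤
        ∫⁻ y in ball x₀ (4*r), HLMax g y * ENNReal.ofReal (dist y x ^ (s - (n:ℝ))) := by
      rw [← lintegral_iUnion (fun m => measurableSet_ball.diff measurableSet_ball) hdisj]
      exact lintegral_mono_set (Set.iUnion_subset fun m => Set.diff_subset.trans (hsubm m))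
    -- telescoping
    have hteles : ENNReal.ofReal |u x - f 0| ≤
        ∑' m : ℕ, ENNReal.ofReal |f (m+1) - f m| := by
      by_cases hS : (∑' m : ℕ, ENNReal.ofReal |f (m+1) - f m|) = ⊤
      · rw [hS]; exact le_top
      · have hsummable : Summable (fun m : ℕ => |f (m+1) - f m|) := by
          have h1 := ENNReal.summable_toReal hS
          refine h1.congr fun m => ?_
          rw [ENNReal.toReal_ofReal (abs_nonneg _)]
        have hdsum : Summable (fun m : ℕ => f (m+1) - f m) := hsummable.of_abs
        have htsum : (∑' m : ℕ, (f (m+1) - f m)) = u x - f 0 := by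
          refine tendsto_nhds_unique hdsum.hasSum.tendsto_sum_nat ?_
          have hps : ∀ m : ℕ, (∑ i ∈ Finset.range m, (f (i+1) - f i)) = f m - f 0 :=
            fun m => Finset.sum_range_sub f m
          have := hfx.sub_const (f 0)
          refine this.congr fun m => (hps m).symm
        calc ENNReal.ofReal |u x - f 0| = ENNReal.ofReal |∑' m : ℕ, (f (m+1) - f m)| := by
              rw [htsum]
          _ ≤ ENNReal.ofReal (∑' m : ℕ, |f (m+1) - f m|) := by
              refine ENNReal.ofReal_le_ofReal ?_
              have := norm_tsum_le_tsum_norm (f := fun m : ℕ => f (m+1) - f m)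
                (by simpa [Real.norm_eq_abs] using hsummable)
              simpa [Real.norm_eq_abs] using this
          _ = ∑' m : ℕ, ENNReal.ofReal |f (m+1) - f m| :=
              ENNReal.ofReal_tsum_of_nonneg (fun m => abs_nonneg _) hsummable
    -- bridge
    have hf0 : f 0 = ⨍ y in ball x (2*r), u y := by
      rw [hfdef]; norm_num
    have hbridge : ENNReal.ofReal |(⨍ y in ball x₀ r, u y) - f 0| ≤ ENNReal.ofReal (Kc n s) *
        ∫⁻ y in ball x (2*(r/2^0)) \ ball x (r/2^0),
          HLMax g y * ENNReal.ofReal (dist y x ^ (s - (n:ℝ))) := by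
      have h0 : (r/2^0 : ℝ) = r := by norm_num
      rw [hf0, h0]
      have hsubB : ball x₀ r ⊆ ball x (2*r) := fun z hz => mem_ball.2 (by
        calc dist z x ≤ dist z x₀ + dist x₀ x := dist_triangle _ _ _
          _ < r + r := add_lt_add (mem_ball.1 hz) (by rw [dist_comm]; exact mem_ball.1 hxB)
          _ = 2*r := by ring)
      have hvolB : (volume (ball x (2*r))).toReal ≤ 2^n * (volume (ball x₀ r)).toReal := by
        rw [vol_ball_toReal hn1 x (by positivity), vol_ball_toReal hn1 x₀ hr.le, mul_pow]
        rw [mul_assoc]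
      have hu0 : IntegrableOn u (ball x (2*r)) volume := by
        have := hum 0; rwa [h0] at this
      have hgi0 : IntegrableOn g (ball x (2*r)) volume := by
        have := hgim 0; rwa [h0] at this
      have hsub0 : ball x (2*r) ⊆ ball x₀ (4*r) := by
        have := hsubm 0; rwa [h0] at this
      exact potential_step hn hs0 hs1 hg0 hN hHaj hr hsub0 hsubB hvolB
        (measure_ball_pos _ _ hr).ne' hu0 hgi0
    -- assemble
    have habs3 : |u x - ⨍ y in ball x₀ r, u y| ≤
        |u x - f 0| + |(⨍ y in ball x₀ r, u y) - f 0| := by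
      have h := abs_sub_le (u x) (f 0) (⨍ y in ball x₀ r, u y)
      rw [abs_sub_comm (f 0)] at h
      exact h
    calc ENNReal.ofReal |u x - ⨍ y in ball x₀ r, u y|
        ≤ ENNReal.ofReal (|u x - f 0| + |(⨍ y in ball x₀ r, u y) - f 0|) :=
          ENNReal.ofReal_le_ofReal habs3
      _ ≤ ENNReal.ofReal |u x - f 0| + ENNReal.ofReal |(⨍ y in ball x₀ r, u y) - f 0| :=
          ENNReal.ofReal_add_le
      _ ≤ (∑' m : ℕ, ENNReal.ofReal |f (m+1) - f m|) +
            ENNReal.ofReal (Kc n s) * ∫⁻ y in ball x (2*(r/2^0)) \ ball x (r/2^0),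
              HLMax g y * ENNReal.ofReal (dist y x ^ (s - (n:ℝ))) :=
          add_le_add hteles hbridge
      _ ≤ ENNReal.ofReal (Kc n s) * (∑' m : ℕ, ∫⁻ y in ball x (2*(r/2^m)) \ ball x (r/2^m),
              HLMax g y * ENNReal.ofReal (dist y x ^ (s - (n:ℝ)))) +
            ENNReal.ofReal (Kc n s) * ∫⁻ y in ball x₀ (4*r),
              HLMax g y * ENNReal.ofReal (dist y x ^ (s - (n:ℝ))) := by
          refine add_le_add ?_ (mul_le_mul_right (le_trans (ENNReal.le_tsum 0) hsum) _)
          rw [← ENNReal.tsum_mul_left]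
          exact ENNReal.tsum_le_tsum hd
      _ ≤ (ENNReal.ofReal (Kc n s) * ∫⁻ y in ball x₀ (4*r),
              HLMax g y * ENNReal.ofReal (dist y x ^ (s - (n:ℝ)))) +
            ENNReal.ofReal (Kc n s) * ∫⁻ y in ball x₀ (4*r),
              HLMax g y * ENNReal.ofReal (dist y x ^ (s - (n:ℝ))) :=
          add_le_add_left (mul_le_mul_right hsum _) _
      _ = ENNReal.ofReal (2 * Kc n s) * ∫⁻ y in ball x₀ (4*r),
              HLMax g y * ENNReal.ofReal (dist y x ^ (s - (n:ℝ))) := by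
          rw [← two_mul, ← mul_assoc, ENNReal.ofReal_mul (by norm_num : (0:ℝ) ≤ 2)]
          norm_num
  · -- degenerate case : g not integrable, RHS is infinite
    have hLtop : ∫⁻ z in ball x₀ (4*r), ENNReal.ofReal |g z| = ⊤ := by
      by_contra h
      refine hgint ⟨hgm.aestronglyMeasurable, ?_⟩
      rw [HasFiniteIntegral]
      rw [lintegral_congr (fun z => (Real.enorm_eq_ofReal_abs (g z)))]
      exact lt_top_iff_ne_top.2 h
    haveI := nontrivEu hn1
    refine Filter.Eventually.of_forall fun x => ?_
    have hM : ∀ y ∈ ball x₀ (4*r), HLMax g y = ⊤ := by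
      intro y hy
      have h8 : (0:ℝ) < 8*r := by linarith
      have hsub8 : ball x₀ (4*r) ⊆ ball y (8*r) := fun z hz => mem_ball.2 (by
        calc dist z y ≤ dist z x₀ + dist x₀ y := dist_triangle _ _ _
          _ < 4*r + 4*r := add_lt_add (mem_ball.1 hz) (by rw [dist_comm]; exact mem_ball.1 hy)
          _ = 8*r := by ring)
      have hge : (volume (ball y (8*r)))⁻¹ * ∫⁻ z in ball y (8*r), ENNReal.ofReal |g z| ≤
          HLMax g y :=
        le_iSup₂ (f := fun (t:ℝ) (_:0<t) =>
          (volume (ball y t))⁻¹ * ∫⁻ z in ball y t, ENNReal.ofReal |g z|) (8*r) h8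
      have hlin : ∫⁻ z in ball y (8*r), ENNReal.ofReal |g z| = ⊤ :=
        eq_top_iff.2 (hLtop ▸ lintegral_mono_set hsub8)
      rw [hlin, ENNReal.mul_top (ENNReal.inv_ne_zero.2 measure_ball_lt_top.ne)] at hge
      exact top_le_iff.1 hge
    have htop : ∫⁻ y in ball x₀ (4*r),
        HLMax g y * ENNReal.ofReal (dist y x ^ (s - (n:ℝ))) = ⊤ := by
      refine eq_top_iff.2 ?_
      calc (⊤:ℝ≥0∞) = ⊤ * volume (ball x₀ (4*r) \ {x}) := by
            rw [ENNReal.top_mul ?_]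
            rw [measure_diff_null (measure_singleton x)]
            exact (measure_ball_pos _ _ (by linarith)).ne'
        _ = ∫⁻ _ in ball x₀ (4*r) \ {x}, (⊤:ℝ≥0∞) := (setLIntegral_const _ _).symm
        _ ≤ ∫⁻ y in ball x₀ (4*r) \ {x},
              HLMax g y * ENNReal.ofReal (dist y x ^ (s - (n:ℝ))) := by
            refine lintegral_mono_ae ?_
            filter_upwards [ae_restrict_mem (measurableSet_ball.diff
              (measurableSet_singleton x))] with y hy
            have hyx : y ≠ x := fun h => hy.2 (by simp [h])
            rw [hM y hy.1, ENNReal.top_mul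
              (ENNReal.ofReal_pos.2 (Real.rpow_pos_of_pos (dist_pos.2 hyx) _)).ne']
        _ ≤ ∫⁻ y in ball x₀ (4*r),
              HLMax g y * ENNReal.ofReal (dist y x ^ (s - (n:ℝ))) :=
            lintegral_mono_set Set.diff_subset
    rw [htop, ENNReal.mul_top (ENNReal.ofReal_pos.2 (by linarith)).ne']
    exact le_top
end
end

section
/- Let n ≥ 2 and let Ω ⊆ ℝⁿ be a bounded domain that has the LLC(2) property with constant b ∈ (0,1) and satisfies the separation property with respect to x₀ ∈ Ω and C₀ > 1. Then there exists a constant C' > 0 (depending only on b, C₀, diam(Ω) and dist(x₀, ℝⁿ \ Ω)) such that for every x ∈ Ω there is a curve γ : [0,1] → Ω with γ(0) = x and γ(1) = x₀ satisfying diam(γ([0,t])) ≤ C' · dist(γ(t), ℝⁿ \ Ω) for all t ∈ (0,1]. -/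
open MeasureTheory Metric Set
open scoped ENNReal

noncomputable section

/-- In a bounded domain with the LLC(2) property (constant `b`) and the
separation property (w.r.t. `x₀` and `C₀`), every point can be joined to `x₀` by a curve `γ`
with `diam(γ([0,t])) ≤ C' · dist(γ(t), Ωᶜ)`. -/
theorem stmt18 {n : ℕ} (hn : 2 ≤ n) (Ω : Set (Eu n)) (hΩ : IsDomainEu Ω)
    (hbd : Bornology.IsBounded Ω) (b : ℝ) (hb : b ∈ Set.Ioo (0:ℝ) 1) (hllc : LLC2With Ω b)
    (x₀ : Eu n) (hx₀ : x₀ ∈ Ω) (C₀ : ℝ) (hC₀ : 1 < C₀)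
    (hsep : SeparationProperty Ω x₀ C₀) :
    ∃ C' : ℝ, 0 < C' ∧ ∀ x ∈ Ω, ∃ γ : ℝ → Eu n,
      ContinuousOn γ (Set.Icc 0 1) ∧ γ 0 = x ∧ γ 1 = x₀ ∧
      (∀ t ∈ Set.Icc (0:ℝ) 1, γ t ∈ Ω) ∧
      ∀ t ∈ Set.Ioc (0:ℝ) 1, Metric.diam (γ '' Set.Icc 0 t) ≤ C' * infDist (γ t) Ωᶜ := by
  obtain ⟨hopen, hconn⟩ := hΩ
  obtain ⟨hb0, hb1⟩ := hb
  haveI : NeZero n := ⟨by omega⟩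
  -- Ωᶜ is nonempty
  have hcne : Ωᶜ.Nonempty := by
    by_contra h
    rw [Set.not_nonempty_iff_eq_empty, Set.compl_empty_iff] at h
    obtain ⟨R, hR⟩ := (Metric.isBounded_iff_subset_closedBall (0 : Eu n)).1 hbd
    obtain ⟨x, hx⟩ := exists_norm_eq (Eu n) (le_max_right (R + 1) 0)
    have hxΩ : x ∈ Ω := h ▸ Set.mem_univ x
    have := hR hxΩ
    rw [Metric.mem_closedBall, dist_zero_right, hx] at this
    have : R + 1 ≤ R := le_trans (le_max_left _ _) this
    linarith
  have hdpos : ∀ z ∈ Ω, 0 < infDist z Ωᶜ := by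
    intro z hz
    rw [← (hopen.isClosed_compl).notMem_iff_infDist_pos hcne]
    simpa using hz
  have hd₀ : 0 < infDist x₀ Ωᶜ := hdpos x₀ hx₀
  set d₀ := infDist x₀ Ωᶜ with hd₀def
  set D := Metric.diam Ω with hDdef
  have hD0 : 0 ≤ D := Metric.diam_nonneg
  have hC₀0 : 0 < C₀ := by linarith
  refine ⟨2*C₀ + 4*C₀/b + D*(b+2*C₀)/(b*d₀), by positivity, ?_⟩
  intro x hx
  obtain ⟨γ, hγc, hγΩ, hγ0, hγ1, hγalt⟩ := hsep x hx
  refine ⟨γ, hγc, hγ0, hγ1, hγΩ, ?_⟩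
  intro t ht
  have htΩ : γ t ∈ Ω := hγΩ t ⟨le_of_lt ht.1, ht.2⟩
  have hd : 0 < infDist (γ t) Ωᶜ := hdpos _ htΩ
  set d := infDist (γ t) Ωᶜ with hddef
  have himg : γ '' Set.Icc 0 t ⊆ Ω := by
    rintro _ ⟨s, hs, rfl⟩
    exact hγΩ s ⟨hs.1, hs.2.trans ht.2⟩
  have hterm1 : 0 ≤ (4*C₀/b) * d := by positivity
  have hterm2 : 0 ≤ (D*(b+2*C₀)/(b*d₀)) * d := by positivity
  have hterm0 : 0 ≤ (2*C₀) * d := by positivity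
  rcases hγalt t ht with h1 | h2
  · -- curve stays in the ball of radius C₀ * d
    calc Metric.diam (γ '' Set.Icc 0 t) ≤ Metric.diam (ball (γ t) (C₀*d)) :=
          Metric.diam_mono h1 Metric.isBounded_ball
      _ ≤ 2 * (C₀*d) := Metric.diam_ball (by positivity)
      _ ≤ (2*C₀ + 4*C₀/b + D*(b+2*C₀)/(b*d₀)) * d := by rw [add_mul, add_mul]; linarith
  · by_cases hx₀far : 2*C₀*d/b ≤ dist x₀ (γ t)
    · -- Case A: x₀ is far; LLC forces the whole curve piece to be close
      have hsub : γ '' Set.Icc 0 t ⊆ ball (γ t) (2*C₀*d/b) := by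
        intro y hy
        by_contra hyn
        rw [mem_ball, not_lt] at hyn
        have hCd_le : C₀ * d ≤ 2*C₀*d/b := by
          rw [le_div_iff₀ hb0]; nlinarith
        have hy2 : y ∈ γ '' Set.Icc 0 t \ ball (γ t) (C₀ * d) := by
          refine ⟨hy, ?_⟩
          rw [mem_ball, not_lt]
          exact le_trans hCd_le hyn
        have hne := h2 y hy2
        have hmem := hllc (γ t) (2*C₀*d/b) (by positivity) y
          ⟨himg hy, by rw [mem_ball, not_lt]; exact hyn⟩ x₀
          ⟨hx₀, by rw [mem_ball, not_lt]; exact hx₀far⟩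
        have hsubset : Ω \ ball (γ t) (b * (2*C₀*d/b)) ⊆ Ω \ sphere (γ t) (C₀ * d) := by
          intro z hz
          refine ⟨hz.1, fun hzs => ?_⟩
          have hz2 := hz.2
          rw [mem_ball, not_lt] at hz2
          rw [mem_sphere] at hzs
          have hbeq : b * (2*C₀*d/b) = 2*(C₀*d) := by field_simp
          rw [hbeq, hzs] at hz2
          nlinarith
        have : x₀ ∈ connectedComponentIn (Ω \ sphere (γ t) (C₀ * d)) y :=
          connectedComponentIn_mono y hsubset hmem
        exact hne (connectedComponentIn_eq this)
      calc Metric.diam (γ '' Set.Icc 0 t) ≤ Metric.diam (ball (γ t) (2*C₀*d/b)) :=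
            Metric.diam_mono hsub Metric.isBounded_ball
        _ ≤ 2 * (2*C₀*d/b) := Metric.diam_ball (by positivity)
        _ = (4*C₀/b) * d := by ring
        _ ≤ (2*C₀ + 4*C₀/b + D*(b+2*C₀)/(b*d₀)) * d := by rw [add_mul, add_mul]; linarith
    · -- Case B: x₀ is near, so d is bounded below
      push_neg at hx₀far
      have htri : d₀ ≤ d + dist x₀ (γ t) := infDist_le_infDist_add_dist
      have hkey : b * d₀ ≤ (b + 2*C₀) * d := by
        have h3 : d₀ < d + 2*C₀*d/b := lt_of_le_of_lt htri (by linarith)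
        have h4 : b * d₀ < b * (d + 2*C₀*d/b) := by
          exact (mul_lt_mul_iff_right₀ hb0).2 h3
        have h5 : b * (d + 2*C₀*d/b) = (b + 2*C₀) * d := by field_simp
        linarith [h4, h5.le]
      have hDle : D ≤ (D*(b+2*C₀)/(b*d₀)) * d := by
        rw [div_mul_eq_mul_div, le_div_iff₀ (by positivity)]
        nlinarith [mul_le_mul_of_nonneg_left hkey hD0]
      calc Metric.diam (γ '' Set.Icc 0 t) ≤ D := Metric.diam_mono himg hbd
        _ ≤ (2*C₀ + 4*C₀/b + D*(b+2*C₀)/(b*d₀)) * d := by rw [add_mul, add_mul]; linarith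
end
end
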